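/- arXiv:2305.11547 — 8 statements merged into one kernel-verified Lean document; each statement's English description precedes it below -/
import Mathlib

section
/- Let F : ℝ^m × ℝ^n → ℝ^p be a smooth Euclidean FCRE with constant c and constant rank r, let F(x₀, y₀) = c, and let H be the least-squares solution map at (x₀, y₀). Then the derivative DH(x₀) : ℝ^m → ℝ^n is the unique linear map M satisfying both ∂F/∂y(x₀, y₀) ∘ M = −∂F/∂x(x₀, y₀) and range(M) ⊆ (ker ∂F/∂y(x₀, y₀))^⊥ (orthogonal complement with respect to the Euclidean inner product). In particular, such a linear map M exists and is unique. -/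
/-!
Differentiating `F (x, H x) = c` gives `∂F/∂y ∘ DH = -∂F/∂x`; two solutions of this equation
differ by a map into `K = ker ∂F/∂y`, so at most one has range in `Kᗮ`.

For `w = DH v` and `k` the projection of `w` on `K`, the vector `(v, w - k)` lies in `ker DF`.
Since `DF` has constant rank, the map `p ↦ (π_N (p - p₀), π_R (F p - c))`, with `π_N`, `π_R`
projections onto `ker DF(p₀)` and `range DF(p₀)`, is a local diffeomorphism, and its inverse
carries the line through `(v, w - k)` in `ker DF(p₀)` to a curve of solutions: along it
`π_R ∘ F` is constant, and constant rank forces `DF ξ = 0` whenever `π_R (DF ξ) = 0`.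
Its velocity is `(v, w - k)`, so the least-squares property of `H` gives `‖w‖ ≤ ‖w - k‖`,
and by Pythagoras `k = 0`.
-/

/-- The rank of a continuous linear map between real normed spaces. -/
noncomputable def clmRank {E F : Type*} [NormedAddCommGroup E] [NormedSpace ℝ E]
    [NormedAddCommGroup F] [NormedSpace ℝ F] (f : E →L[ℝ] F) : ℕ :=
  Module.finrank ℝ (LinearMap.range (f : E →ₗ[ℝ] F))

open Filter Topology Module

theorem eventually_eq_of_eventually_hasDerivAt_zero {G : Type*} [NormedAddCommGroup G]
    [NormedSpace ℝ G] {f : ℝ → G} {t₀ : ℝ} (hf : ∀ᶠ t in 𝓝 t₀, HasDerivAt f 0 t) :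
    ∀ᶠ t in 𝓝 t₀, f t = f t₀ := by
  obtain ⟨ε, hε, hball⟩ := Metric.eventually_nhds_iff_ball.mp hf
  filter_upwards [Metric.ball_mem_nhds t₀ hε] with t ht
  exact Metric.isOpen_ball.is_const_of_deriv_eq_zero (convex_ball t₀ ε).isPreconnected
    (fun s hs => (hball s hs).differentiableAt.differentiableWithinAt)
    (fun s hs => (hball s hs).deriv) ht (Metric.mem_ball_self hε)

theorem HasDerivAt.norm_le_norm_of_eventually_norm_sub_le {E : Type*} [NormedAddCommGroup E]
    [NormedSpace ℝ E] {γ₁ γ₂ : ℝ → E} {w₁ w₂ y₀ : E} (h₁ : HasDerivAt γ₁ w₁ 0)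
    (h₂ : HasDerivAt γ₂ w₂ 0) (hγ₁ : γ₁ 0 = y₀) (hγ₂ : γ₂ 0 = y₀)
    (hle : ∀ᶠ t in 𝓝 0, ‖γ₁ t - y₀‖ ≤ ‖γ₂ t - y₀‖) : ‖w₁‖ ≤ ‖w₂‖ := by
  refine le_of_tendsto_of_tendsto (hasDerivAt_iff_tendsto_slope.mp h₁).norm
    (hasDerivAt_iff_tendsto_slope.mp h₂).norm ?_
  filter_upwards [nhdsWithin_le_nhds hle] with t ht
  simp only [slope_def_module, hγ₁, hγ₂, norm_smul]
  gcongr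

theorem Submodule.mem_orthogonal_of_norm_le_norm_sub_starProjection {𝕜 E : Type*} [RCLike 𝕜]
    [NormedAddCommGroup E] [InnerProductSpace 𝕜 E] (K : Submodule 𝕜 E) [K.HasOrthogonalProjection]
    {w : E} (h : ‖w‖ ≤ ‖w - K.starProjection w‖) : w ∈ Kᗮ := by
  have hpyth := norm_sq_eq_add_norm_sq_starProjection w K
  rw [starProjection_orthogonal_val] at hpyth
  have : ‖K.starProjection w‖ ^ 2 ≤ 0 := by nlinarith [norm_nonneg w]
  rw [← orthogonalProjectionOnto_eq_zero_iff, ← ZeroMemClass.coe_eq_zero, ← starProjection_apply,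
    ← norm_eq_zero]
  exact pow_eq_zero_iff two_ne_zero |>.mp (le_antisymm this (sq_nonneg _))

theorem ContinuousLinearMap.eq_of_comp_eq_of_mem_orthogonal_ker {E₁ E₂ G : Type*}
    [NormedAddCommGroup E₁] [NormedSpace ℝ E₁] [NormedAddCommGroup E₂] [InnerProductSpace ℝ E₂]
    [NormedAddCommGroup G] [NormedSpace ℝ G] (A : E₂ →L[ℝ] G) {M M' : E₁ →L[ℝ] E₂}
    (h : A.comp M = A.comp M') (hM : ∀ v, M v ∈ (LinearMap.ker (A : E₂ →ₗ[ℝ] G))ᗮ)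
    (hM' : ∀ v, M' v ∈ (LinearMap.ker (A : E₂ →ₗ[ℝ] G))ᗮ) : M = M' := by
  ext v
  have hker : M v - M' v ∈ LinearMap.ker (A : E₂ →ₗ[ℝ] G) := by
    simpa [sub_eq_zero] using congrArg (fun B : E₁ →L[ℝ] G => B v) h
  exact sub_eq_zero.mp <| Submodule.disjoint_def.mp (Submodule.orthogonal_disjoint _) _ hker
    (sub_mem (hM v) (hM' v))

section Implicit

variable {E₁ E₂ G : Type*} [NormedAddCommGroup E₁] [NormedSpace ℝ E₁] [NormedAddCommGroup E₂]
  [NormedSpace ℝ E₂] [NormedAddCommGroup G] [NormedSpace ℝ G]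

theorem DifferentiableAt.fderiv_prod_apply_eq_add {F : E₁ × E₂ → G} {x : E₁} {y : E₂}
    (hF : DifferentiableAt ℝ F (x, y)) (u : E₁) (w : E₂) :
    fderiv ℝ F (x, y) (u, w) =
      fderiv ℝ (fun x' => F (x', y)) x u + fderiv ℝ (fun y' => F (x, y')) y w := by
  have h₁ : HasFDerivAt (fun x' => F (x', y)) (fderiv ℝ F (x, y) ∘L .inl ℝ E₁ E₂) x :=
    hF.hasFDerivAt.comp x (hasFDerivAt_prodMk_left x y)
  have h₂ : HasFDerivAt (fun y' => F (x, y')) (fderiv ℝ F (x, y) ∘L .inr ℝ E₁ E₂) y :=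
    hF.hasFDerivAt.comp y (hasFDerivAt_prodMk_right x y)
  rw [h₁.fderiv, h₂.fderiv, ContinuousLinearMap.comp_apply, ContinuousLinearMap.comp_apply,
    ← map_add]
  simp

theorem comp_fderiv_eq_neg_of_eventually_eq_const {F : E₁ × E₂ → G} {H : E₁ → E₂} {x₀ : E₁}
    {c : G} (hF : DifferentiableAt ℝ F (x₀, H x₀)) (hH : DifferentiableAt ℝ H x₀)
    (hc : ∀ᶠ x in 𝓝 x₀, F (x, H x) = c) :
    (fderiv ℝ (fun y => F (x₀, y)) (H x₀)).comp (fderiv ℝ H x₀) =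
      -fderiv ℝ (fun x => F (x, H x₀)) x₀ := by
  have hzero : fderiv ℝ F (x₀, H x₀) ∘L (ContinuousLinearMap.id ℝ E₁).prod (fderiv ℝ H x₀) = 0 :=
    (hF.hasFDerivAt.comp x₀ ((hasFDerivAt_id x₀).prodMk hH.hasFDerivAt)).unique
      ((hasFDerivAt_const c x₀).congr_of_eventuallyEq hc)
  ext u
  have := congrArg (fun B : E₁ →L[ℝ] G => B u) hzero
  simp only [ContinuousLinearMap.comp_apply, ContinuousLinearMap.prod_apply,
    ContinuousLinearMap.id_apply, hF.fderiv_prod_apply_eq_add, zero_apply] at this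
  simpa [eq_neg_iff_add_eq_zero, add_comm] using this

end Implicit

section ConstantRank

variable {E G : Type*} [NormedAddCommGroup E] [NormedSpace ℝ E] [NormedAddCommGroup G]
  [NormedSpace ℝ G]

theorem injective_prod_comp_of_proj_ker_range (D : E →L[ℝ] G)
    (πN : E →L[ℝ] LinearMap.ker (D : E →ₗ[ℝ] G))
    (hπN : ∀ x : LinearMap.ker (D : E →ₗ[ℝ] G), πN x = x)
    (πR : G →L[ℝ] LinearMap.range (D : E →ₗ[ℝ] G))
    (hπR : ∀ y : LinearMap.range (D : E →ₗ[ℝ] G), πR y = y) :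
    Function.Injective (πN.prod (πR ∘L D)) := by
  refine (injective_iff_map_eq_zero _).mpr fun ξ hξ => ?_
  have hN : πN ξ = 0 := congrArg Prod.fst hξ
  have hR : πR (D ξ) = 0 := congrArg Prod.snd hξ
  have hDξ : D ξ = 0 := by
    simpa [hR] using congrArg Subtype.val (hπR ⟨D ξ, LinearMap.mem_range_self _ ξ⟩).symm
  simpa [hN] using congrArg Subtype.val (hπN ⟨ξ, hDξ⟩).symm

variable [FiniteDimensional ℝ E]

theorem eventually_eq_zero_of_proj_range_eq_zero {α : Type*} [TopologicalSpace α]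
    {D : α → E →L[ℝ] G} {a₀ : α} (hD : ContinuousAt D a₀)
    (hrank : ∀ᶠ a in 𝓝 a₀, finrank ℝ (LinearMap.range (D a : E →ₗ[ℝ] G)) ≤
      finrank ℝ (LinearMap.range (D a₀ : E →ₗ[ℝ] G)))
    (P : G →L[ℝ] LinearMap.range (D a₀ : E →ₗ[ℝ] G))
    (hP : ∀ y : LinearMap.range (D a₀ : E →ₗ[ℝ] G), P y = y) :
    ∀ᶠ a in 𝓝 a₀, ∀ ξ, P (D a ξ) = 0 → D a ξ = 0 := by
  set T : α → E →L[ℝ] G := fun a => Submodule.subtypeL _ ∘L P ∘L D a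
  have hT₀ : T a₀ = D a₀ := by
    ext ξ
    exact congrArg Subtype.val (hP ⟨D a₀ ξ, LinearMap.mem_range_self _ ξ⟩)
  have hT : ContinuousAt T a₀ :=
    ((ContinuousLinearMap.compL ℝ E G G (Submodule.subtypeL _ ∘L P)).continuous.tendsto _).comp hD
  -- lower semicontinuity of the rank
  have hTrank : ∀ᶠ a in 𝓝 a₀, finrank ℝ (LinearMap.range (D a₀ : E →ₗ[ℝ] G)) ≤
      finrank ℝ (LinearMap.range (T a : E →ₗ[ℝ] G)) := by
    have hmem : T a₀ ∈ {f : E →L[ℝ] G |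
        (finrank ℝ (LinearMap.range (D a₀ : E →ₗ[ℝ] G)) : Cardinal) ≤ (f : E →ₗ[ℝ] G).rank} := by
      rw [Set.mem_ofPred_eq, hT₀, LinearMap.rank, ← finrank_eq_rank]
    filter_upwards [hT.eventually_mem ((isOpen_setOfPred_nat_le_rank _).mem_nhds hmem)] with a ha
    rwa [LinearMap.rank, ← finrank_eq_rank, Nat.cast_le] at ha
  filter_upwards [hrank, hTrank] with a hDa hTa ξ hξ
  have hker : LinearMap.ker (D a : E →ₗ[ℝ] G) = LinearMap.ker (T a : E →ₗ[ℝ] G) := by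
    refine Submodule.eq_of_le_of_finrank_le (fun ζ hζ => ?_) ?_
    · change (P (D a ζ) : G) = 0
      rw [show D a ζ = 0 from hζ, map_zero, ZeroMemClass.coe_zero]
    · have := (D a : E →ₗ[ℝ] G).finrank_range_add_finrank_ker
      have := (T a : E →ₗ[ℝ] G).finrank_range_add_finrank_ker
      omega
  have : ξ ∈ LinearMap.ker (T a : E →ₗ[ℝ] G) := by
    change (P (D a ξ) : G) = 0
    rw [hξ, ZeroMemClass.coe_zero]
  rwa [← hker] at this

theorem eventually_eq_of_proj_range_eq {f : E → G} {γ : ℝ → E} {p₀ : E}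
    (hf : ContDiff ℝ 1 f)
    (hrank : ∀ᶠ p in 𝓝 p₀, finrank ℝ (LinearMap.range (fderiv ℝ f p : E →ₗ[ℝ] G)) ≤
      finrank ℝ (LinearMap.range (fderiv ℝ f p₀ : E →ₗ[ℝ] G)))
    (P : G →L[ℝ] LinearMap.range (fderiv ℝ f p₀ : E →ₗ[ℝ] G))
    (hP : ∀ y : LinearMap.range (fderiv ℝ f p₀ : E →ₗ[ℝ] G), P y = y)
    (hγ : ∀ᶠ t in 𝓝 0, DifferentiableAt ℝ γ t) (hγ₀ : γ 0 = p₀)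
    (hPγ : ∀ᶠ t in 𝓝 0, P (f (γ t)) = P (f p₀)) :
    ∀ᶠ t in 𝓝 0, f (γ t) = f p₀ := by
  have hker : ∀ᶠ t in 𝓝 0, ∀ ξ, P (fderiv ℝ f (γ t) ξ) = 0 → fderiv ℝ f (γ t) ξ = 0 := by
    have hγc : Tendsto γ (𝓝 0) (𝓝 p₀) := hγ₀ ▸ hγ.self_of_nhds.continuousAt.tendsto
    exact hγc.eventually <| eventually_eq_zero_of_proj_range_eq_zero
      (hf.continuous_fderiv one_ne_zero).continuousAt hrank P hP
  have hderiv : ∀ᶠ t in 𝓝 0, HasDerivAt (fun t => f (γ t)) 0 t := by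
    filter_upwards [hγ, hker, hPγ.eventually_nhds] with t hγt hkert hPγt
    have hfγ := ((hf.differentiable one_ne_zero) (γ t)).hasFDerivAt.comp_hasDerivAt t
      hγt.hasDerivAt
    -- `P ∘ f ∘ γ` is locally constant at `t`
    have hP : P (fderiv ℝ f (γ t) (deriv γ t)) = 0 :=
      (P.hasFDerivAt.comp_hasDerivAt t hfγ).unique
        ((hasDerivAt_const t (P (f p₀))).congr_of_eventuallyEq hPγt)
    rwa [hkert _ hP] at hfγ
  simpa [hγ₀] using eventually_eq_of_eventually_hasDerivAt_zero hderiv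

theorem exists_hasDerivAt_levelSet_of_fderiv_eq_zero {f : E → G} {p₀ ξ : E}
    (hf : ContDiff ℝ 1 f)
    (hrank : ∀ᶠ p in 𝓝 p₀, finrank ℝ (LinearMap.range (fderiv ℝ f p : E →ₗ[ℝ] G)) ≤
      finrank ℝ (LinearMap.range (fderiv ℝ f p₀ : E →ₗ[ℝ] G)))
    (hξ : fderiv ℝ f p₀ ξ = 0) :
    ∃ γ : ℝ → E, γ 0 = p₀ ∧ HasDerivAt γ ξ 0 ∧ ∀ᶠ t in 𝓝 0, f (γ t) = f p₀ := by
  set D := fderiv ℝ f p₀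
  set N := LinearMap.ker (D : E →ₗ[ℝ] G)
  set R := LinearMap.range (D : E →ₗ[ℝ] G)
  obtain ⟨πN, hπN⟩ := Submodule.ClosedComplemented.of_finiteDimensional N
  obtain ⟨πR, hπR⟩ := Submodule.ClosedComplemented.of_finiteDimensional R
  set Φ : E → N × R := fun p => (πN (p - p₀), πR (f p - f p₀))
  have hdim : finrank ℝ E = finrank ℝ (N × R) := by
    rw [finrank_prod, add_comm, LinearMap.finrank_range_add_finrank_ker]
  set e : E ≃L[ℝ] N × R := (LinearMap.linearEquivOfInjective _
    (injective_prod_comp_of_proj_ker_range D πN hπN πR hπR) hdim).toContinuousLinearEquiv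
  have hΦ : ContDiff ℝ 1 Φ :=
    (πN.contDiff.comp (contDiff_id.sub contDiff_const)).prodMk
      (πR.contDiff.comp (hf.sub contDiff_const))
  have hΦ' : HasFDerivAt Φ (e : E →L[ℝ] N × R) p₀ :=
    (πN.hasFDerivAt.comp p₀ ((hasFDerivAt_id p₀).sub_const p₀)).prodMk
      (πR.hasFDerivAt.comp p₀ ((hf.differentiable one_ne_zero p₀).hasFDerivAt.sub_const (f p₀)))
  have hΦ₀ : Φ p₀ = 0 := by simp [Φ]
  have hΦs := hΦ.contDiffAt.hasStrictFDerivAt' hΦ' one_ne_zero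
  set Ψ := hΦs.localInverse Φ e p₀
  have hΨ : ContDiffAt ℝ 1 Ψ 0 := hΦ₀ ▸ hΦ.contDiffAt.to_localInverse hΦ' one_ne_zero
  set c : ℝ → N × R := fun t => (t • ⟨ξ, hξ⟩, 0)
  have hc : HasDerivAt c (⟨ξ, hξ⟩, 0) 0 := by
    simpa using ((hasDerivAt_id (0 : ℝ)).smul_const (⟨ξ, hξ⟩ : N)).prodMk (hasDerivAt_const 0 0)
  have hc₀ : c 0 = 0 := by simp [c]
  have hcΦ : Tendsto c (𝓝 0) (𝓝 (Φ p₀)) := by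
    simpa [hc₀, hΦ₀] using hc.continuousAt.tendsto
  have hγ₀ : Ψ (c 0) = p₀ := by simpa [hc₀, hΦ₀] using hΦs.localInverse_apply_image
  refine ⟨Ψ ∘ c, hγ₀, ?_, ?_⟩
  · have hΨ' : HasFDerivAt Ψ (e.symm : N × R →L[ℝ] E) (c 0) := by
      simpa [hc₀, hΦ₀] using hΦs.to_localInverse.hasFDerivAt
    have hξ' : e.symm (⟨ξ, hξ⟩, 0) = ξ := by
      rw [ContinuousLinearEquiv.symm_apply_eq]
      ext
      · exact congrArg Subtype.val (hπN ⟨ξ, hξ⟩).symm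
      · simp [e, hξ]
    simpa [hξ'] using hΨ'.comp_hasDerivAt 0 hc
  · refine eventually_eq_of_proj_range_eq hf hrank πR hπR ?_ hγ₀ ?_
    · have hΨ₁ : ∀ᶠ y in 𝓝 (Φ p₀), ContDiffAt ℝ 1 Ψ y := hΦ₀ ▸ hΨ.eventually (by simp)
      filter_upwards [hcΦ.eventually hΨ₁] with t ht
      exact (ht.differentiableAt one_ne_zero).comp t
        ((differentiableAt_id.smul_const _).prodMk (differentiableAt_const _))
    · filter_upwards [hcΦ.eventually hΦs.eventually_right_inverse] with t ht
      rw [← sub_eq_zero, ← map_sub]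
      exact congrArg Prod.snd ht

end ConstantRank

section LeastSquares

variable {E₁ E₂ G : Type*} [NormedAddCommGroup E₁] [NormedSpace ℝ E₁] [FiniteDimensional ℝ E₁]
  [NormedAddCommGroup E₂] [InnerProductSpace ℝ E₂] [FiniteDimensional ℝ E₂]
  [NormedAddCommGroup G] [NormedSpace ℝ G]

theorem fderiv_apply_mem_orthogonal_ker_of_leastSquares {F : E₁ × E₂ → G} {H : E₁ → E₂}
    {x₀ : E₁} {y₀ : E₂} (hF : ContDiff ℝ 1 F)
    (hrank : ∀ᶠ p in 𝓝 (x₀, y₀), finrank ℝ (LinearMap.range (fderiv ℝ F p : E₁ × E₂ →ₗ[ℝ] G)) ≤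
      finrank ℝ (LinearMap.range (fderiv ℝ F (x₀, y₀) : E₁ × E₂ →ₗ[ℝ] G)))
    (hH : DifferentiableAt ℝ H x₀) (hHx₀ : H x₀ = y₀)
    (hsol : ∀ᶠ x in 𝓝 x₀, F (x, H x) = F (x₀, y₀))
    (hmin : ∀ᶠ p in 𝓝 (x₀, y₀), F p = F (x₀, y₀) → ‖H p.1 - y₀‖ ≤ ‖p.2 - y₀‖) (v : E₁) :
    fderiv ℝ H x₀ v ∈ (LinearMap.ker (fderiv ℝ (fun y => F (x₀, y)) y₀ : E₂ →ₗ[ℝ] G))ᗮ := by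
  set K := LinearMap.ker (fderiv ℝ (fun y => F (x₀, y)) y₀ : E₂ →ₗ[ℝ] G)
  set w := fderiv ℝ H x₀ v
  set k := K.starProjection w
  have hFd := hF.differentiable one_ne_zero
  have himplicit := comp_fderiv_eq_neg_of_eventually_eq_const (hFd _) hH hsol
  rw [hHx₀] at himplicit
  have htangent : fderiv ℝ F (x₀, y₀) (v, w - k) = 0 := by
    have hk : fderiv ℝ (fun y => F (x₀, y)) y₀ k = 0 := K.starProjection_apply_mem w
    rw [(hFd _).fderiv_prod_apply_eq_add, map_sub, hk, sub_zero,
      ← ContinuousLinearMap.comp_apply, himplicit]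
    simp
  obtain ⟨γ, hγ₀, hγ, hγF⟩ := exists_hasDerivAt_levelSet_of_fderiv_eq_zero hF hrank htangent
  have hγ₁ : HasDerivAt (fun t => H (γ t).1) w 0 :=
    (hγ₀ ▸ hH.hasFDerivAt : HasFDerivAt H _ (γ 0).1).comp_hasDerivAt 0 hγ.fst
  have hle : ∀ᶠ t in 𝓝 0, ‖H (γ t).1 - y₀‖ ≤ ‖(γ t).2 - y₀‖ := by
    filter_upwards [(hγ₀ ▸ hγ.continuousAt.tendsto : Tendsto γ _ _).eventually hmin, hγF]
      with t hmint hFt using hmint hFt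
  exact K.mem_orthogonal_of_norm_le_norm_sub_starProjection
    (hγ₁.norm_le_norm_of_eventually_norm_sub_le hγ.snd (by simp [hγ₀, hHx₀]) (by simp [hγ₀]) hle)

end LeastSquares

theorem stmt1_general {m n p : ℕ}
    (F : EuclideanSpace ℝ (Fin m) × EuclideanSpace ℝ (Fin n) → EuclideanSpace ℝ (Fin p))
    (c : EuclideanSpace ℝ (Fin p)) (r : ℕ)
    (hF : ContDiff ℝ ((⊤ : ℕ∞) : WithTop ℕ∞) F)
    (hrank : ∀ x y, clmRank (fderiv ℝ F (x, y)) = r)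
    (x₀ : EuclideanSpace ℝ (Fin m)) (y₀ : EuclideanSpace ℝ (Fin n))
    (hsol : F (x₀, y₀) = c)
    -- `H` is the least-squares solution map of `F` at `(x₀, y₀)`:
    (Xh : Set (EuclideanSpace ℝ (Fin m))) (Yh : Set (EuclideanSpace ℝ (Fin n)))
    (H : EuclideanSpace ℝ (Fin m) → EuclideanSpace ℝ (Fin n))
    (hXh : IsOpen Xh) (hx₀ : x₀ ∈ Xh) (hYh : IsOpen Yh) (hy₀ : y₀ ∈ Yh)
    (hH : ContDiffOn ℝ ((⊤ : ℕ∞) : WithTop ℕ∞) H Xh) (hHx₀ : H x₀ = y₀)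
    (hLS : ∀ x ∈ Xh, H x ∈ Yh ∧ F (x, H x) = c ∧
      ∀ y ∈ Yh, F (x, y) = c → ‖H x - y₀‖ ≤ ‖y - y₀‖) :
    ((fderiv ℝ (fun y' => F (x₀, y')) y₀).comp (fderiv ℝ H x₀) =
        -(fderiv ℝ (fun x' => F (x', y₀)) x₀) ∧
      ∀ v, fderiv ℝ H x₀ v ∈ (LinearMap.ker ((fderiv ℝ (fun y' => F (x₀, y')) y₀ :
        EuclideanSpace ℝ (Fin n) →ₗ[ℝ] EuclideanSpace ℝ (Fin p))))ᗮ) ∧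
    ∀ M : EuclideanSpace ℝ (Fin m) →L[ℝ] EuclideanSpace ℝ (Fin n),
      (fderiv ℝ (fun y' => F (x₀, y')) y₀).comp M =
        -(fderiv ℝ (fun x' => F (x', y₀)) x₀) →
      (∀ v, M v ∈ (LinearMap.ker ((fderiv ℝ (fun y' => F (x₀, y')) y₀ :
        EuclideanSpace ℝ (Fin n) →ₗ[ℝ] EuclideanSpace ℝ (Fin p))))ᗮ) →
      M = fderiv ℝ H x₀ := by
  have hF₁ : ContDiff ℝ 1 F := hF.of_le (by exact_mod_cast le_top)
  have hHd : DifferentiableAt ℝ H x₀ :=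
    (hH.contDiffAt (hXh.mem_nhds hx₀)).differentiableAt (by simp)
  have hHsol : ∀ᶠ x in 𝓝 x₀, F (x, H x) = F (x₀, y₀) :=
    eventually_of_mem (hXh.mem_nhds hx₀) fun x hx => hsol ▸ (hLS x hx).2.1
  have hrank_le : ∀ᶠ q in 𝓝 (x₀, y₀), clmRank (fderiv ℝ F q) ≤ clmRank (fderiv ℝ F (x₀, y₀)) :=
    Eventually.of_forall fun q => (hrank q.1 q.2).trans (hrank x₀ y₀).symm |>.le
  have hmin : ∀ᶠ q in 𝓝 (x₀, y₀), F q = F (x₀, y₀) → ‖H q.1 - y₀‖ ≤ ‖q.2 - y₀‖ := by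
    filter_upwards [prod_mem_nhds (hXh.mem_nhds hx₀) (hYh.mem_nhds hy₀)] with q hq hFq
    exact (hLS q.1 hq.1).2.2 q.2 hq.2 (hsol ▸ hFq)
  have himplicit := comp_fderiv_eq_neg_of_eventually_eq_const (hF₁.differentiable one_ne_zero _)
    hHd hHsol
  rw [hHx₀] at himplicit
  have hperp := fderiv_apply_mem_orthogonal_ker_of_leastSquares hF₁ hrank_le hHd hHx₀ hHsol hmin
  exact ⟨⟨himplicit, hperp⟩, fun M hM hMperp =>
    ContinuousLinearMap.eq_of_comp_eq_of_mem_orthogonal_ker _ (hM.trans himplicit.symm)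
      hMperp hperp⟩

/-- The derivative of the least-squares solution map of a Euclidean FCRE
is the unique linear map `M` with `∂F/∂y(x₀,y₀) ∘ M = -∂F/∂x(x₀,y₀)` whose range is
contained in the orthogonal complement of `ker ∂F/∂y(x₀,y₀)`. -/
theorem stmt1 {m n p : ℕ}
    (F : EuclideanSpace ℝ (Fin m) × EuclideanSpace ℝ (Fin n) → EuclideanSpace ℝ (Fin p))
    (c : EuclideanSpace ℝ (Fin p)) (r : ℕ)
    (hF : ContDiff ℝ ((⊤ : ℕ∞) : WithTop ℕ∞) F)
    (hfeas : ∀ x, ∃ y, F (x, y) = c)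
    (hranky : ∀ x y, clmRank (fderiv ℝ (fun y' => F (x, y')) y) = r)
    (hrank : ∀ x y, clmRank (fderiv ℝ F (x, y)) = r)
    (x₀ : EuclideanSpace ℝ (Fin m)) (y₀ : EuclideanSpace ℝ (Fin n))
    (hsol : F (x₀, y₀) = c)
    -- `H` is the least-squares solution map of `F` at `(x₀, y₀)`:
    (Xh : Set (EuclideanSpace ℝ (Fin m))) (Yh : Set (EuclideanSpace ℝ (Fin n)))
    (H : EuclideanSpace ℝ (Fin m) → EuclideanSpace ℝ (Fin n))
    (hXh : IsOpen Xh) (hx₀ : x₀ ∈ Xh) (hYh : IsOpen Yh) (hy₀ : y₀ ∈ Yh)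
    (hH : ContDiffOn ℝ ((⊤ : ℕ∞) : WithTop ℕ∞) H Xh) (hHx₀ : H x₀ = y₀)
    (hLS : ∀ x ∈ Xh, H x ∈ Yh ∧ F (x, H x) = c ∧
      ∀ y ∈ Yh, F (x, y) = c → ‖H x - y₀‖ ≤ ‖y - y₀‖) :
    ((fderiv ℝ (fun y' => F (x₀, y')) y₀).comp (fderiv ℝ H x₀) =
        -(fderiv ℝ (fun x' => F (x', y₀)) x₀) ∧
      ∀ v, fderiv ℝ H x₀ v ∈ (LinearMap.ker ((fderiv ℝ (fun y' => F (x₀, y')) y₀ :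
        EuclideanSpace ℝ (Fin n) →ₗ[ℝ] EuclideanSpace ℝ (Fin p))))ᗮ) ∧
    ∀ M : EuclideanSpace ℝ (Fin m) →L[ℝ] EuclideanSpace ℝ (Fin n),
      (fderiv ℝ (fun y' => F (x₀, y')) y₀).comp M =
        -(fderiv ℝ (fun x' => F (x', y₀)) x₀) →
      (∀ v, M v ∈ (LinearMap.ker ((fderiv ℝ (fun y' => F (x₀, y')) y₀ :
        EuclideanSpace ℝ (Fin n) →ₗ[ℝ] EuclideanSpace ℝ (Fin p))))ᗮ) →
      M = fderiv ℝ H x₀ :=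
  stmt1_general F c r hF hrank x₀ y₀ hsol Xh Yh H hXh hx₀ hYh hy₀ hH hHx₀ hLS
end

section
/- Let R : ℝ^m × ℝ^n → ℝ^p with constant c and S : ℝ^m × ℝ^n → ℝ^q with constant c' be two smooth Euclidean FCREs such that every pair (x, y) with R(x, y) = c also satisfies S(x, y) = c' (i.e. S = c' is a subproblem of the refinement R = c). Suppose R(x₀, y₀) = c, and let H_R and H_S denote the least-squares solution maps of R and S at (x₀, y₀), respectively. Then the operator norms of their derivatives satisfy ‖DH_S(x₀)‖ ≤ ‖DH_R(x₀)‖; that is, the least-squares condition number of the subproblem is at most that of the refinement. -/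
open Filter Topology

section

variable {𝕜 E F : Type*} [NontriviallyNormedField 𝕜] [NormedAddCommGroup E] [NormedSpace 𝕜 E]
  [NormedAddCommGroup F] [NormedSpace 𝕜 F]

theorem norm_deriv_le_of_eventually_norm_sub_le {φ ψ : 𝕜 → F} {φ' ψ' : F} {t₀ : 𝕜}
    (hφ : HasDerivAt φ φ' t₀) (hψ : HasDerivAt ψ ψ' t₀)
    (h : ∀ᶠ t in 𝓝 t₀, ‖φ t - φ t₀‖ ≤ ‖ψ t - ψ t₀‖) : ‖φ'‖ ≤ ‖ψ'‖ := by
  refine le_of_tendsto_of_tendsto (hasDerivAt_iff_tendsto_slope.mp hφ).norm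
    (hasDerivAt_iff_tendsto_slope.mp hψ).norm ?_
  filter_upwards [nhdsWithin_le_nhds h] with t ht
  simp only [slope_def_module, norm_smul]
  gcongr

theorem norm_fderiv_apply_le_of_eventually_norm_sub_le {f g : E → F} {x₀ : E}
    (hf : DifferentiableAt 𝕜 f x₀) (hg : DifferentiableAt 𝕜 g x₀)
    (h : ∀ᶠ x in 𝓝 x₀, ‖f x - f x₀‖ ≤ ‖g x - g x₀‖) (v : E) :
    ‖fderiv 𝕜 f x₀ v‖ ≤ ‖fderiv 𝕜 g x₀ v‖ := by
  have hline : HasDerivAt (fun t : 𝕜 => x₀ + t • v) v 0 := by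
    simpa using ((hasDerivAt_id (0 : 𝕜)).smul_const v).const_add x₀
  have hline₀ : x₀ + (0 : 𝕜) • v = x₀ := by simp
  have hf' : HasFDerivAt f (fderiv 𝕜 f x₀) (x₀ + (0 : 𝕜) • v) := by
    rw [hline₀]; exact hf.hasFDerivAt
  have hg' : HasFDerivAt g (fderiv 𝕜 g x₀) (x₀ + (0 : 𝕜) • v) := by
    rw [hline₀]; exact hg.hasFDerivAt
  refine norm_deriv_le_of_eventually_norm_sub_le (hf'.comp_hasDerivAt 0 hline)
    (hg'.comp_hasDerivAt 0 hline) ?_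
  rw [← hline₀] at h
  exact hline.continuousAt.tendsto.eventually h

theorem norm_fderiv_le_of_eventually_norm_sub_le {f g : E → F} {x₀ : E}
    (hf : DifferentiableAt 𝕜 f x₀) (hg : DifferentiableAt 𝕜 g x₀)
    (h : ∀ᶠ x in 𝓝 x₀, ‖f x - f x₀‖ ≤ ‖g x - g x₀‖) :
    ‖fderiv 𝕜 f x₀‖ ≤ ‖fderiv 𝕜 g x₀‖ :=
  (fderiv 𝕜 f x₀).opNorm_le_bound (norm_nonneg _) fun v =>
    (norm_fderiv_apply_le_of_eventually_norm_sub_le hf hg h v).trans ((fderiv 𝕜 g x₀).le_opNorm v)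

end

theorem stmt3_general {m n p q : ℕ}
    (R : EuclideanSpace ℝ (Fin m) × EuclideanSpace ℝ (Fin n) → EuclideanSpace ℝ (Fin p))
    (S : EuclideanSpace ℝ (Fin m) × EuclideanSpace ℝ (Fin n) → EuclideanSpace ℝ (Fin q))
    (c : EuclideanSpace ℝ (Fin p)) (c' : EuclideanSpace ℝ (Fin q))
    -- `S = c'` is a subproblem of the refinement `R = c`:
    (hsub : ∀ x y, R (x, y) = c → S (x, y) = c')
    (x₀ : EuclideanSpace ℝ (Fin m)) (y₀ : EuclideanSpace ℝ (Fin n))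
    -- `HR` is the least-squares solution map of `R` at `(x₀, y₀)`:
    (XhR : Set (EuclideanSpace ℝ (Fin m))) (YhR : Set (EuclideanSpace ℝ (Fin n)))
    (HR : EuclideanSpace ℝ (Fin m) → EuclideanSpace ℝ (Fin n))
    (hXhR : IsOpen XhR) (hx₀R : x₀ ∈ XhR)
    (hHR : ContDiffOn ℝ ((⊤ : ℕ∞) : WithTop ℕ∞) HR XhR) (hHRx₀ : HR x₀ = y₀)
    (hLSR : ∀ x ∈ XhR, HR x ∈ YhR ∧ R (x, HR x) = c ∧
      ∀ y ∈ YhR, R (x, y) = c → ‖HR x - y₀‖ ≤ ‖y - y₀‖)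
    -- `HS` is the least-squares solution map of `S` at `(x₀, y₀)`:
    (XhS : Set (EuclideanSpace ℝ (Fin m))) (YhS : Set (EuclideanSpace ℝ (Fin n)))
    (HS : EuclideanSpace ℝ (Fin m) → EuclideanSpace ℝ (Fin n))
    (hXhS : IsOpen XhS) (hx₀S : x₀ ∈ XhS) (hYhS : IsOpen YhS) (hy₀S : y₀ ∈ YhS)
    (hHS : ContDiffOn ℝ ((⊤ : ℕ∞) : WithTop ℕ∞) HS XhS) (hHSx₀ : HS x₀ = y₀)
    (hLSS : ∀ x ∈ XhS, HS x ∈ YhS ∧ S (x, HS x) = c' ∧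
      ∀ y ∈ YhS, S (x, y) = c' → ‖HS x - y₀‖ ≤ ‖y - y₀‖) :
    ‖fderiv ℝ HS x₀‖ ≤ ‖fderiv ℝ HR x₀‖ := by
  have hHRd : DifferentiableAt ℝ HR x₀ :=
    (hHR.contDiffAt (hXhR.mem_nhds hx₀R)).differentiableAt (by simp)
  have hHSd : DifferentiableAt ℝ HS x₀ :=
    (hHS.contDiffAt (hXhS.mem_nhds hx₀S)).differentiableAt (by simp)
  have hHR_mem_YhS : ∀ᶠ x in 𝓝 x₀, HR x ∈ YhS :=
    hHRd.continuousAt.eventually_mem (hYhS.mem_nhds (hHRx₀ ▸ hy₀S))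
  refine norm_fderiv_le_of_eventually_norm_sub_le hHSd hHRd ?_
  filter_upwards [hXhR.mem_nhds hx₀R, hXhS.mem_nhds hx₀S, hHR_mem_YhS] with x hxR hxS hxY
  rw [hHSx₀, hHRx₀]
  exact (hLSS x hxS).2.2 (HR x) hxY (hsub x (HR x) (hLSR x hxR).2.1)

/-- If `S = c'` is a subproblem of the refinement `R = c`, then the
least-squares condition number of the subproblem bounds that of the refinement from below. -/
theorem stmt3 {m n p q : ℕ}
    (R : EuclideanSpace ℝ (Fin m) × EuclideanSpace ℝ (Fin n) → EuclideanSpace ℝ (Fin p))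
    (S : EuclideanSpace ℝ (Fin m) × EuclideanSpace ℝ (Fin n) → EuclideanSpace ℝ (Fin q))
    (c : EuclideanSpace ℝ (Fin p)) (c' : EuclideanSpace ℝ (Fin q)) (rR rS : ℕ)
    -- `R = c` is a Euclidean FCRE:
    (hR : ContDiff ℝ ((⊤ : ℕ∞) : WithTop ℕ∞) R)
    (hRfeas : ∀ x, ∃ y, R (x, y) = c)
    (hRranky : ∀ x y, clmRank (fderiv ℝ (fun y' => R (x, y')) y) = rR)
    (hRrank : ∀ x y, clmRank (fderiv ℝ R (x, y)) = rR)
    -- `S = c'` is a Euclidean FCRE: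
    (hS : ContDiff ℝ ((⊤ : ℕ∞) : WithTop ℕ∞) S)
    (hSfeas : ∀ x, ∃ y, S (x, y) = c')
    (hSranky : ∀ x y, clmRank (fderiv ℝ (fun y' => S (x, y')) y) = rS)
    (hSrank : ∀ x y, clmRank (fderiv ℝ S (x, y)) = rS)
    -- `S = c'` is a subproblem of the refinement `R = c`:
    (hsub : ∀ x y, R (x, y) = c → S (x, y) = c')
    (x₀ : EuclideanSpace ℝ (Fin m)) (y₀ : EuclideanSpace ℝ (Fin n))
    (hsol : R (x₀, y₀) = c)
    -- `HR` is the least-squares solution map of `R` at `(x₀, y₀)`: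
    (XhR : Set (EuclideanSpace ℝ (Fin m))) (YhR : Set (EuclideanSpace ℝ (Fin n)))
    (HR : EuclideanSpace ℝ (Fin m) → EuclideanSpace ℝ (Fin n))
    (hXhR : IsOpen XhR) (hx₀R : x₀ ∈ XhR) (hYhR : IsOpen YhR) (hy₀R : y₀ ∈ YhR)
    (hHR : ContDiffOn ℝ ((⊤ : ℕ∞) : WithTop ℕ∞) HR XhR) (hHRx₀ : HR x₀ = y₀)
    (hLSR : ∀ x ∈ XhR, HR x ∈ YhR ∧ R (x, HR x) = c ∧
      ∀ y ∈ YhR, R (x, y) = c → ‖HR x - y₀‖ ≤ ‖y - y₀‖)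
    -- `HS` is the least-squares solution map of `S` at `(x₀, y₀)`:
    (XhS : Set (EuclideanSpace ℝ (Fin m))) (YhS : Set (EuclideanSpace ℝ (Fin n)))
    (HS : EuclideanSpace ℝ (Fin m) → EuclideanSpace ℝ (Fin n))
    (hXhS : IsOpen XhS) (hx₀S : x₀ ∈ XhS) (hYhS : IsOpen YhS) (hy₀S : y₀ ∈ YhS)
    (hHS : ContDiffOn ℝ ((⊤ : ℕ∞) : WithTop ℕ∞) HS XhS) (hHSx₀ : HS x₀ = y₀)
    (hLSS : ∀ x ∈ XhS, HS x ∈ YhS ∧ S (x, HS x) = c' ∧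
      ∀ y ∈ YhS, S (x, y) = c' → ‖HS x - y₀‖ ≤ ‖y - y₀‖) :
    ‖fderiv ℝ HS x₀‖ ≤ ‖fderiv ℝ HR x₀‖ :=
  stmt3_general R S c c' hsub x₀ y₀ XhR YhR HR hXhR hx₀R hHR hHRx₀ hLSR XhS YhS HS hXhS hx₀S hYhS
    hy₀S hHS hHSx₀ hLSS
end

section
/- Let F : ℝ^m × ℝ^n → ℝ^p be a smooth map such that the partial derivative ∂F/∂y(x, y) : ℝ^n → ℝ^p has constant rank r for all (x, y). Then every point (x₀, y₀) ∈ ℝ^m × ℝ^n has an open neighbourhood W on which there exist smooth maps E₁, …, E_{n−r} : W → ℝ^n such that for every (x, y) ∈ W the vectors E₁(x, y), …, E_{n−r}(x, y) are linearly independent and span the kernel of ∂F/∂y(x, y). -/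
/-!
Let `A q = ∂F/∂y(q)` and fix a generalized inverse `g` of `A₀ = A q₀`, i.e.
`A₀ g A₀ = A₀`. The smooth family `M q = 1 - g A₀ + g (A q)` equals `1` at `q₀`, so it is
invertible near `q₀`, and it maps `ker (A q)` into `ker A₀` since
`A₀ (M q w) = A₀ w - A₀ g A₀ w = 0` for `w ∈ ker (A q)`. As the kernels all have dimension
`n - r`, `(M q)⁻¹` maps `ker A₀` onto `ker (A q)`, so `(M q)⁻¹ bᵢ` is a smooth frame of the
kernels for any basis `bᵢ` of `ker A₀`.
-/

open Module Submodule

theorem LinearMap.exists_comp_comp_eq_self {K V V' : Type*} [DivisionRing K] [AddCommGroup V]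
    [Module K V] [AddCommGroup V'] [Module K V'] (f : V →ₗ[K] V') :
    ∃ g : V' →ₗ[K] V, f ∘ₗ g ∘ₗ f = f := by
  obtain ⟨s, hs⟩ := f.rangeRestrict.exists_rightInverse_of_surjective f.range_rangeRestrict
  obtain ⟨ρ, hρ⟩ := (range f).subtype.exists_leftInverse_of_injective (ker_subtype _)
  refine ⟨s ∘ₗ ρ, LinearMap.ext fun v => ?_⟩
  have hρf : ρ (f v) = f.rangeRestrict v := LinearMap.congr_fun hρ (f.rangeRestrict v)
  simpa [hρf] using congr_arg Subtype.val (LinearMap.congr_fun hs (f.rangeRestrict v))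

theorem Submodule.eq_map_symm_of_map_le_of_finrank_eq {K V V' : Type*} [DivisionRing K]
    [AddCommGroup V] [Module K V] [AddCommGroup V'] [Module K V'] (e : V ≃ₗ[K] V')
    {S : Submodule K V} {T : Submodule K V'} [FiniteDimensional K T]
    (hle : S.map (e : V →ₗ[K] V') ≤ T) (hrank : finrank K S = finrank K T) :
    S = T.map (e.symm : V' →ₗ[K] V) :=
  ((map_symm_eq_iff e).2 (eq_of_le_of_finrank_eq hle
    ((LinearEquiv.finrank_map_eq e S).trans hrank))).symm

theorem Submodule.exists_linearIndependent_span_eq {K V : Type*} [DivisionRing K]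
    [AddCommGroup V] [Module K V] (S : Submodule K V) [FiniteDimensional K S] {k : ℕ}
    (hk : finrank K S = k) :
    ∃ v : Fin k → V, LinearIndependent K v ∧ span K (Set.range v) = S := by
  let b := Module.finBasisOfFinrankEq K S hk
  refine ⟨S.subtype ∘ b, b.linearIndependent.map' S.subtype S.ker_subtype, ?_⟩
  rw [Set.range_comp, span_image, b.span_eq, map_subtype_top]

theorem fderiv_comp_prodMk_right {𝕜 X E F : Type*} [NontriviallyNormedField 𝕜]
    [NormedAddCommGroup X] [NormedSpace 𝕜 X] [NormedAddCommGroup E] [NormedSpace 𝕜 E]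
    [NormedAddCommGroup F] [NormedSpace 𝕜 F] {f : X × E → F} {x : X} {y : E}
    (hf : DifferentiableAt 𝕜 f (x, y)) :
    fderiv 𝕜 (fun y' => f (x, y')) y =
      fderiv 𝕜 f (x, y) ∘L ContinuousLinearMap.inr 𝕜 X E :=
  (hf.hasFDerivAt.comp y (hasFDerivAt_prodMk_right x y)).fderiv

section KernelFrame

variable {𝕜 X E F : Type*} [NontriviallyNormedField 𝕜] [CompleteSpace 𝕜]
  [NormedAddCommGroup X] [NormedSpace 𝕜 X]
  [NormedAddCommGroup E] [NormedSpace 𝕜 E]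
  [NormedAddCommGroup F] [NormedSpace 𝕜 F] [FiniteDimensional 𝕜 F]

theorem ContinuousLinearMap.exists_comp_comp_eq_self (f : E →L[𝕜] F) :
    ∃ g : F →L[𝕜] E, f ∘L g ∘L f = f := by
  obtain ⟨g, hg⟩ := (f : E →ₗ[𝕜] F).exists_comp_comp_eq_self
  exact ⟨LinearMap.toContinuousLinearMap g, ContinuousLinearMap.coe_injective hg⟩

variable [FiniteDimensional 𝕜 E]

theorem exists_contDiffOn_frame_ker {n : WithTop ℕ∞} {k : ℕ} {A : X → E →L[𝕜] F}
    (hA : ContDiff 𝕜 n A) (hk : ∀ x, finrank 𝕜 (LinearMap.ker (A x : E →ₗ[𝕜] F)) = k)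
    (x₀ : X) :
    ∃ W : Set X, IsOpen W ∧ x₀ ∈ W ∧ ∃ v : Fin k → X → E,
      (∀ i, ContDiffOn 𝕜 n (v i) W) ∧ ∀ x ∈ W,
        LinearIndependent 𝕜 (fun i => v i x) ∧
        span 𝕜 (Set.range fun i => v i x) = LinearMap.ker (A x : E →ₗ[𝕜] F) := by
  have : CompleteSpace E := FiniteDimensional.complete 𝕜 E
  obtain ⟨g, hg⟩ := (A x₀).exists_comp_comp_eq_self
  set M : X → E →L[𝕜] E := fun x => .id 𝕜 E - g ∘L A x₀ + g ∘L A x with hM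
  have hMx₀ : M x₀ = ContinuousLinearEquiv.refl 𝕜 E := by simp [hM]
  have hMcd : ContDiff 𝕜 n M := contDiff_const.add (contDiff_const.clm_comp hA)
  have hMker : ∀ x, ∀ w ∈ LinearMap.ker (A x : E →ₗ[𝕜] F),
      M x w ∈ LinearMap.ker (A x₀ : E →ₗ[𝕜] F) := by
    intro x w (hw : A x w = 0)
    have hgw : A x₀ (g (A x₀ w)) = A x₀ w := congr($hg w)
    simp [hM, hw, hgw]
  obtain ⟨b, hb_li, hb_span⟩ := exists_linearIndependent_span_eq _ (hk x₀)
  refine ⟨M ⁻¹' Set.range ((↑) : (E ≃L[𝕜] E) → E →L[𝕜] E),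
    ContinuousLinearEquiv.isOpen.preimage hMcd.continuous, ⟨_, hMx₀.symm⟩,
    fun i x => (M x).inverse (b i), fun i x ⟨e, he⟩ => ?_, fun x ⟨e, he⟩ => ?_⟩
  · have hinv : ContDiffAt 𝕜 n ContinuousLinearMap.inverse (M x) :=
      he ▸ contDiffAt_map_inverse e
    exact ((hinv.comp x hMcd.contDiffAt).clm_apply contDiffAt_const).contDiffWithinAt
  · have hinv : (M x).inverse = e.symm := by rw [← he, ContinuousLinearMap.inverse_equiv]
    have hker : LinearMap.ker (A x : E →ₗ[𝕜] F) =
        (LinearMap.ker (A x₀ : E →ₗ[𝕜] F)).map (e.symm.toLinearEquiv : E →ₗ[𝕜] E) :=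
      eq_map_symm_of_map_le_of_finrank_eq e.toLinearEquiv
        (map_le_iff_le_comap.2 fun w hw => by simpa [← he] using hMker x w hw) (by rw [hk, hk])
    simp only [hinv]
    refine ⟨hb_li.map' _ e.symm.toLinearEquiv.ker, ?_⟩
    rw [hker, ← hb_span, map_span, ← Set.range_comp]
    rfl

end KernelFrame

theorem clmRank_add_finrank_ker {E F : Type*} [NormedAddCommGroup E] [NormedSpace ℝ E]
    [FiniteDimensional ℝ E] [NormedAddCommGroup F] [NormedSpace ℝ F] (f : E →L[ℝ] F) :
    clmRank f + finrank ℝ (LinearMap.ker (f : E →ₗ[ℝ] F)) = finrank ℝ E :=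
  LinearMap.finrank_range_add_finrank_ker _

/-- If `∂F/∂y(x,y)` has constant rank `r`, then locally around any point
there exist `n - r` smooth vector fields that are linearly independent and span the kernel
of `∂F/∂y(x,y)` at every point. -/
theorem stmt6 {m n p : ℕ}
    (F : EuclideanSpace ℝ (Fin m) × EuclideanSpace ℝ (Fin n) → EuclideanSpace ℝ (Fin p))
    (hF : ContDiff ℝ ((⊤ : ℕ∞) : WithTop ℕ∞) F)
    (r : ℕ)
    (hranky : ∀ x y, clmRank (fderiv ℝ (fun y' => F (x, y')) y) = r)
    (x₀ : EuclideanSpace ℝ (Fin m)) (y₀ : EuclideanSpace ℝ (Fin n)) :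
    ∃ W : Set (EuclideanSpace ℝ (Fin m) × EuclideanSpace ℝ (Fin n)),
      IsOpen W ∧ (x₀, y₀) ∈ W ∧
      ∃ E : Fin (n - r) → EuclideanSpace ℝ (Fin m) × EuclideanSpace ℝ (Fin n) →
          EuclideanSpace ℝ (Fin n),
        (∀ i, ContDiffOn ℝ ((⊤ : ℕ∞) : WithTop ℕ∞) (E i) W) ∧
        ∀ q ∈ W,
          LinearIndependent ℝ (fun i : Fin (n - r) => E i q) ∧
          Submodule.span ℝ (Set.range fun i : Fin (n - r) => E i q) =
            LinearMap.ker (fderiv ℝ (fun y' => F (q.1, y')) q.2 :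
              EuclideanSpace ℝ (Fin n) →ₗ[ℝ] EuclideanSpace ℝ (Fin p)) := by
  set A := fun q => fderiv ℝ F q ∘L ContinuousLinearMap.inr ℝ _ (EuclideanSpace ℝ (Fin n))
  have hpartial : ∀ q : EuclideanSpace ℝ (Fin m) × EuclideanSpace ℝ (Fin n),
      fderiv ℝ (fun y' => F (q.1, y')) q.2 = A q :=
    fun q => fderiv_comp_prodMk_right (hF.differentiable (by simp) q)
  have hA : ContDiff ℝ ((⊤ : ℕ∞) : WithTop ℕ∞) A :=
    (hF.fderiv_right (by simp)).clm_comp contDiff_const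
  have hk : ∀ q, finrank ℝ (LinearMap.ker (A q).toLinearMap) = n - r := by
    intro q
    have := clmRank_add_finrank_ker (A q)
    rw [← hpartial, hranky, finrank_euclideanSpace_fin] at this
    rw [← hpartial]
    omega
  obtain ⟨W, hW, hq₀, E, hE, hframe⟩ := exists_contDiffOn_frame_ker hA hk (x₀, y₀)
  exact ⟨W, hW, hq₀, E, hE, fun q hq => hpartial q ▸ hframe q hq⟩
end

section
/- Let F : ℝ^m × ℝ^n → ℝ^p be a smooth Euclidean FCRE with constant c and constant rank r, and let ψ : ℝ^n → ℝ^n be a surjective isometry of the Euclidean metric such that F(x, ψ(y)) = F(x, y) for all (x, y). Fix (x, y) with F(x, y) = c and let H_y and H_{ψ(y)} denote the least-squares solution maps of F at (x, y) and at (x, ψ(y)), respectively. Then ‖DH_y(x)‖ = ‖DH_{ψ(y)}(x)‖ in operator norm; that is, the least-squares condition number of F at (x, y) equals that at (x, ψ(y)). -/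
/-!
Composing with the isometry `ψ` (or its inverse) turns a solution of `F(x', ·) = c` near `y`
into one near `ψ y` at the same distance from the base point, so both least-squares solution
maps realise the same minimal distance: `‖H₁ x' - y‖ = ‖H₂ x' - ψ y‖` for `x'` near `x`. The
norm of a directional derivative `‖DH(x) v‖` is the limit of `‖H(x + t v) - H x‖ / |t|`, so it
only depends on this distance function, and hence so does the operator norm of `DH(x)`.
-/

open Filter Topology

section DistanceFunction

variable {E F G : Type*} [NormedAddCommGroup E] [NormedSpace ℝ E]
  [NormedAddCommGroup F] [NormedSpace ℝ F] [NormedAddCommGroup G] [NormedSpace ℝ G]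

theorem ContinuousLinearMap.opNorm_eq_of_forall_norm_apply_eq {L : E →L[ℝ] F} {M : E →L[ℝ] G}
    (h : ∀ v, ‖L v‖ = ‖M v‖) : ‖L‖ = ‖M‖ :=
  le_antisymm (L.opNorm_le_bound (norm_nonneg _) fun v => h v ▸ M.le_opNorm v)
    (M.opNorm_le_bound (norm_nonneg _) fun v => h v ▸ L.le_opNorm v)

theorem HasFDerivAt.tendsto_norm_sub_div_abs {f : E → F} {L : E →L[ℝ] F} {x : E}
    (hf : HasFDerivAt f L x) (v : E) :
    Tendsto (fun t : ℝ => ‖f (x + t • v) - f x‖ / |t|) (𝓝[≠] 0) (𝓝 ‖L v‖) := by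
  have hline : HasDerivAt (fun t : ℝ => x + t • v) v 0 := by
    simpa using ((hasDerivAt_id (0 : ℝ)).smul_const v).const_add x
  have hcomp : HasDerivAt (fun t : ℝ => f (x + t • v)) (L v) 0 :=
    (by simpa using hf : HasFDerivAt f L (x + (0 : ℝ) • v)).comp_hasDerivAt 0 hline
  refine ((hasDerivAt_iff_tendsto_slope.mp hcomp).norm).congr fun t => ?_
  simp [slope, norm_smul, div_eq_inv_mul]

theorem norm_fderiv_eq_of_eventually_norm_sub_eq {f : E → F} {g : E → G} {x : E}
    (hf : DifferentiableAt ℝ f x) (hg : DifferentiableAt ℝ g x)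
    (hfg : ∀ᶠ x' in 𝓝 x, ‖f x' - f x‖ = ‖g x' - g x‖) :
    ‖fderiv ℝ f x‖ = ‖fderiv ℝ g x‖ := by
  refine ContinuousLinearMap.opNorm_eq_of_forall_norm_apply_eq fun v => ?_
  have hline : Tendsto (fun t : ℝ => x + t • v) (𝓝[≠] 0) (𝓝 x) :=
    tendsto_nhdsWithin_of_tendsto_nhds
      ((by fun_prop : Continuous fun t : ℝ => x + t • v).tendsto' 0 x (by simp))
  refine tendsto_nhds_unique (hf.hasFDerivAt.tendsto_norm_sub_div_abs v) ?_
  refine (hg.hasFDerivAt.tendsto_norm_sub_div_abs v).congr' ?_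
  filter_upwards [hline.eventually hfg] with t ht
  rw [ht]

end DistanceFunction

theorem norm_sub_le_of_isometryEquiv_invariant {X V W : Type*} [NormedAddCommGroup V]
    {F : X × V → W} {c : W} (ψ : V ≃ᵢ V) (hinv : ∀ x y, F (x, ψ y) = F (x, y))
    {Y : Set V} {x : X} {y₀ h z : V}
    (hmin : ∀ y' ∈ Y, F (x, y') = c → ‖h - y₀‖ ≤ ‖y' - y₀‖)
    (hz : F (x, z) = c) (hzY : ψ.symm z ∈ Y) :
    ‖h - y₀‖ ≤ ‖z - ψ y₀‖ := by
  have hsol : F (x, ψ.symm z) = c := by rw [← hinv, ψ.apply_symm_apply, hz]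
  calc ‖h - y₀‖ ≤ ‖ψ.symm z - y₀‖ := hmin _ hzY hsol
    _ = ‖z - ψ y₀‖ := by
      rw [← dist_eq_norm, ← dist_eq_norm, ← ψ.dist_eq, ψ.apply_symm_apply]

theorem stmt7_general {m n p : ℕ}
    (F : EuclideanSpace ℝ (Fin m) × EuclideanSpace ℝ (Fin n) → EuclideanSpace ℝ (Fin p))
    (c : EuclideanSpace ℝ (Fin p))
    (ψ : EuclideanSpace ℝ (Fin n) → EuclideanSpace ℝ (Fin n))
    (hψiso : Isometry ψ) (hψsurj : Function.Surjective ψ)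
    (hinv : ∀ x y, F (x, ψ y) = F (x, y))
    (x : EuclideanSpace ℝ (Fin m)) (y : EuclideanSpace ℝ (Fin n))
    -- `H₁` is the least-squares solution map of `F` at `(x, y)`:
    (Xh₁ : Set (EuclideanSpace ℝ (Fin m))) (Yh₁ : Set (EuclideanSpace ℝ (Fin n)))
    (H₁ : EuclideanSpace ℝ (Fin m) → EuclideanSpace ℝ (Fin n))
    (hXh₁ : IsOpen Xh₁) (hx₁ : x ∈ Xh₁) (hYh₁ : IsOpen Yh₁) (hy₁ : y ∈ Yh₁)
    (hH₁ : ContDiffOn ℝ ((⊤ : ℕ∞) : WithTop ℕ∞) H₁ Xh₁) (hH₁x : H₁ x = y)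
    (hLS₁ : ∀ x' ∈ Xh₁, H₁ x' ∈ Yh₁ ∧ F (x', H₁ x') = c ∧
      ∀ y' ∈ Yh₁, F (x', y') = c → ‖H₁ x' - y‖ ≤ ‖y' - y‖)
    -- `H₂` is the least-squares solution map of `F` at `(x, ψ(y))`:
    (Xh₂ : Set (EuclideanSpace ℝ (Fin m))) (Yh₂ : Set (EuclideanSpace ℝ (Fin n)))
    (H₂ : EuclideanSpace ℝ (Fin m) → EuclideanSpace ℝ (Fin n))
    (hXh₂ : IsOpen Xh₂) (hx₂ : x ∈ Xh₂) (hYh₂ : IsOpen Yh₂) (hy₂ : ψ y ∈ Yh₂)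
    (hH₂ : ContDiffOn ℝ ((⊤ : ℕ∞) : WithTop ℕ∞) H₂ Xh₂) (hH₂x : H₂ x = ψ y)
    (hLS₂ : ∀ x' ∈ Xh₂, H₂ x' ∈ Yh₂ ∧ F (x', H₂ x') = c ∧
      ∀ y' ∈ Yh₂, F (x', y') = c → ‖H₂ x' - ψ y‖ ≤ ‖y' - ψ y‖) :
    ‖fderiv ℝ H₁ x‖ = ‖fderiv ℝ H₂ x‖ := by
  let Ψ : EuclideanSpace ℝ (Fin n) ≃ᵢ EuclideanSpace ℝ (Fin n) :=
    { Equiv.ofBijective ψ ⟨hψiso.injective, hψsurj⟩ with isometry_toFun := hψiso }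
  have hinv' : ∀ x y, F (x, Ψ.symm y) = F (x, y) := fun x' y' => by
    rw [← hinv x' (Ψ.symm y'), show ψ (Ψ.symm y') = y' from Ψ.apply_symm_apply y']
  have hΨy : Ψ.symm (ψ y) = y := Ψ.symm_apply_apply y
  have hd₁ := (hH₁.contDiffAt (hXh₁.mem_nhds hx₁)).differentiableAt (by simp)
  have hd₂ := (hH₂.contDiffAt (hXh₂.mem_nhds hx₂)).differentiableAt (by simp)
  have hY₁ : ∀ᶠ x' in 𝓝 x, Ψ.symm (H₂ x') ∈ Yh₁ :=
    (Ψ.symm.continuous.continuousAt.comp hd₂.continuousAt).preimage_mem_nhds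
      (hYh₁.mem_nhds (by rwa [Function.comp_apply, hH₂x, hΨy]))
  have hY₂ : ∀ᶠ x' in 𝓝 x, ψ (H₁ x') ∈ Yh₂ :=
    (hψiso.continuous.continuousAt.comp hd₁.continuousAt).preimage_mem_nhds
      (hYh₂.mem_nhds (by simpa [hH₁x] using hy₂))
  refine norm_fderiv_eq_of_eventually_norm_sub_eq hd₁ hd₂ ?_
  filter_upwards [hXh₁.mem_nhds hx₁, hXh₂.mem_nhds hx₂, hY₁, hY₂] with x' hx₁' hx₂' hy₁' hy₂'
  obtain ⟨-, hsol₁, hmin₁⟩ := hLS₁ x' hx₁'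
  obtain ⟨-, hsol₂, hmin₂⟩ := hLS₂ x' hx₂'
  rw [hH₁x, hH₂x]
  refine le_antisymm (norm_sub_le_of_isometryEquiv_invariant Ψ hinv hmin₁ hsol₂ hy₁') ?_
  simpa [hΨy] using norm_sub_le_of_isometryEquiv_invariant Ψ.symm hinv' hmin₂ hsol₁ hy₂'

/-- If a Euclidean FCRE is invariant under a surjective isometry `ψ` of the
output space, then the least-squares condition numbers at `(x, y)` and `(x, ψ(y))` agree. -/
theorem stmt7 {m n p : ℕ}
    (F : EuclideanSpace ℝ (Fin m) × EuclideanSpace ℝ (Fin n) → EuclideanSpace ℝ (Fin p))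
    (c : EuclideanSpace ℝ (Fin p)) (r : ℕ)
    (hF : ContDiff ℝ ((⊤ : ℕ∞) : WithTop ℕ∞) F)
    (hfeas : ∀ x, ∃ y, F (x, y) = c)
    (hranky : ∀ x y, clmRank (fderiv ℝ (fun y' => F (x, y')) y) = r)
    (hrank : ∀ x y, clmRank (fderiv ℝ F (x, y)) = r)
    (ψ : EuclideanSpace ℝ (Fin n) → EuclideanSpace ℝ (Fin n))
    (hψiso : Isometry ψ) (hψsurj : Function.Surjective ψ)
    (hinv : ∀ x y, F (x, ψ y) = F (x, y))
    (x : EuclideanSpace ℝ (Fin m)) (y : EuclideanSpace ℝ (Fin n))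
    (hsol : F (x, y) = c)
    -- `H₁` is the least-squares solution map of `F` at `(x, y)`:
    (Xh₁ : Set (EuclideanSpace ℝ (Fin m))) (Yh₁ : Set (EuclideanSpace ℝ (Fin n)))
    (H₁ : EuclideanSpace ℝ (Fin m) → EuclideanSpace ℝ (Fin n))
    (hXh₁ : IsOpen Xh₁) (hx₁ : x ∈ Xh₁) (hYh₁ : IsOpen Yh₁) (hy₁ : y ∈ Yh₁)
    (hH₁ : ContDiffOn ℝ ((⊤ : ℕ∞) : WithTop ℕ∞) H₁ Xh₁) (hH₁x : H₁ x = y)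
    (hLS₁ : ∀ x' ∈ Xh₁, H₁ x' ∈ Yh₁ ∧ F (x', H₁ x') = c ∧
      ∀ y' ∈ Yh₁, F (x', y') = c → ‖H₁ x' - y‖ ≤ ‖y' - y‖)
    -- `H₂` is the least-squares solution map of `F` at `(x, ψ(y))`:
    (Xh₂ : Set (EuclideanSpace ℝ (Fin m))) (Yh₂ : Set (EuclideanSpace ℝ (Fin n)))
    (H₂ : EuclideanSpace ℝ (Fin m) → EuclideanSpace ℝ (Fin n))
    (hXh₂ : IsOpen Xh₂) (hx₂ : x ∈ Xh₂) (hYh₂ : IsOpen Yh₂) (hy₂ : ψ y ∈ Yh₂)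
    (hH₂ : ContDiffOn ℝ ((⊤ : ℕ∞) : WithTop ℕ∞) H₂ Xh₂) (hH₂x : H₂ x = ψ y)
    (hLS₂ : ∀ x' ∈ Xh₂, H₂ x' ∈ Yh₂ ∧ F (x', H₂ x') = c ∧
      ∀ y' ∈ Yh₂, F (x', y') = c → ‖H₂ x' - ψ y‖ ≤ ‖y' - ψ y‖) :
    ‖fderiv ℝ H₁ x‖ = ‖fderiv ℝ H₂ x‖ :=
  stmt7_general F c ψ hψiso hψsurj hinv x y Xh₁ Yh₁ H₁ hXh₁ hx₁ hYh₁ hy₁ hH₁ hH₁x hLS₁ Xh₂ Yh₂ H₂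
    hXh₂ hx₂ hYh₂ hy₂ hH₂ hH₂x hLS₂
end

section
/- Let L ∈ ℝ^{m×k} and R ∈ ℝ^{k×n}, and let T : ℝ^{m×k} × ℝ^{k×n} → ℝ^{m×n} be the linear map T(L̇, Ṙ) = L̇R + LṘ, where all three matrix spaces carry the Frobenius inner product. Then the multiset of eigenvalues of the positive semidefinite operator T ∘ T* on ℝ^{m×n} equals { σ_i(L)² + σ_j(R)² : 1 ≤ i ≤ m, 1 ≤ j ≤ n }, where σ_i(L) denotes the i-th largest singular value of L with the convention that σ_i(L) = 0 for i > k, and likewise σ_j(R) = 0 for j > k. -/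
/-!
Testing `T` against `(X, 0)` and `(0, Y)` shows `T* B = (B Rᵀ, Lᵀ B)`, so `T ∘ T*` is the
Sylvester operator `B ↦ (L Lᵀ) B + B (Rᵀ R)`. If `u_a` and `v_c` are orthonormal eigenbases of
`L Lᵀ` and `Rᵀ R`, with eigenvalues `μ_a` and `ν_c`, the outer products `u_a v_cᵀ` form an
eigenbasis of it with eigenvalues `μ_a + ν_c`. Sorting both decreasingly, the Courant–Fischer
max-min principle gives `ν_c = σ_c(R)²` and `μ_a = σ_a(Lᵀ)²`, and `σ_a(Lᵀ) = σ_a(L)`: the image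
under `L` of a subspace on which `‖L v‖ ≥ σ ‖v‖` is one of the same dimension on which
`‖Lᵀ w‖ ≥ σ ‖w‖`, and symmetrically.
-/

/-- The `i`-th largest singular value (1-indexed) of a real matrix, via the
Courant–Fischer max-min characterisation; by convention it is `0` when `i` exceeds
the number of rows or columns. -/
noncomputable def sval {α β : Type*} [Fintype α] [Fintype β] [DecidableEq β]
    (A : Matrix α β ℝ) (i : ℕ) : ℝ :=
  sSup {t : ℝ | ∃ V : Submodule ℝ (EuclideanSpace ℝ β), Module.finrank ℝ V = i ∧
    ∀ v ∈ V, t * ‖v‖ ≤ ‖Matrix.toEuclideanLin A v‖}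

/-- The Frobenius inner product of two real matrices. -/
def finner {α β : Type*} [Fintype α] [Fintype β] (A B : Matrix α β ℝ) : ℝ :=
  ∑ i, ∑ j, A i j * B i j

open Module Submodule InnerProductSpace Matrix

namespace OrthonormalBasis

variable {𝕜 E ι : Type*} [RCLike 𝕜] [NormedAddCommGroup E] [InnerProductSpace 𝕜 E] [Fintype ι]

theorem finrank_span_finset (b : OrthonormalBasis ι 𝕜 E) (s : Finset ι) :
    finrank 𝕜 (span 𝕜 (Set.range fun j : s => b j)) = s.card :=
  (finrank_span_eq_card (b.orthonormal.linearIndependent.comp _ Subtype.val_injective)).trans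
    (Fintype.card_coe s)

theorem repr_apply_eq_zero_of_mem_span (b : OrthonormalBasis ι 𝕜 E) {s : Finset ι} {v : E}
    (hv : v ∈ span 𝕜 (Set.range fun j : s => b j)) {j : ι} (hj : j ∉ s) : b.repr v j = 0 := by
  have : span 𝕜 (Set.range fun j : s => b j) ≤ (𝕜 ∙ b j)ᗮ := by
    rw [span_le]
    rintro _ ⟨i, rfl⟩
    exact mem_orthogonal_singleton_iff_inner_right.2 (b.inner_eq_zero (by grind))
  rw [b.repr_apply_apply]
  exact mem_orthogonal_singleton_iff_inner_right.1 (this hv)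

end OrthonormalBasis

namespace LinearMap

variable {𝕜 : Type*} [RCLike 𝕜]
  {E : Type*} [NormedAddCommGroup E] [InnerProductSpace 𝕜 E] [FiniteDimensional 𝕜 E]
  {F : Type*} [NormedAddCommGroup F] [InnerProductSpace 𝕜 F] [FiniteDimensional 𝕜 F]
  (T : E →ₗ[𝕜] F)

theorem norm_apply_sq_eq_sum_singularValues {n : ℕ} (hn : finrank 𝕜 E = n) (v : E) :
    ‖T v‖ ^ 2 = ∑ j : Fin n, T.singularValues j ^ 2 *
      ‖(T.isSymmetric_adjoint_comp_self.eigenvectorBasis hn).repr v j‖ ^ 2 := by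
  set e := T.isSymmetric_adjoint_comp_self.eigenvectorBasis hn
  have : ⟪T v, T v⟫_𝕜 = ⟪e.repr v, e.repr ((adjoint T ∘ₗ T) v)⟫_𝕜 := by
    rw [e.repr.inner_map_map, comp_apply, adjoint_inner_right]
  rw [← inner_self_eq_norm_sq (𝕜 := 𝕜), this, PiLp.inner_apply]
  simp only [e, T.isSymmetric_adjoint_comp_self.eigenvectorBasis_apply_self_apply,
    T.sq_singularValues_fin hn]
  simp only [RCLike.inner_apply, mul_assoc, RCLike.mul_conj, map_sum]
  norm_cast

theorem exists_finrank_eq_singularValues_mul_norm_le {i : ℕ} (hi : i < finrank 𝕜 E) :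
    ∃ V : Submodule 𝕜 E, finrank 𝕜 V = i + 1 ∧ ∀ v ∈ V, T.singularValues i * ‖v‖ ≤ ‖T v‖ := by
  set e := T.isSymmetric_adjoint_comp_self.eigenvectorBasis rfl with he
  set s := Finset.Iic (⟨i, hi⟩ : Fin (finrank 𝕜 E))
  refine ⟨span 𝕜 (Set.range fun j : s => e j), by rw [e.finrank_span_finset, Fin.card_Iic],
    fun v hv => ?_⟩
  refine (pow_le_pow_iff_left₀ (mul_nonneg (T.singularValues_nonneg i) (norm_nonneg v))
    (norm_nonneg _) two_ne_zero).1 ?_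
  rw [mul_pow, T.norm_apply_sq_eq_sum_singularValues rfl, ← e.repr.norm_map,
    EuclideanSpace.norm_sq_eq, Finset.mul_sum]
  refine Finset.sum_le_sum fun j _ => ?_
  by_cases hj : j ∈ s
  · exact mul_le_mul_of_nonneg_right (pow_le_pow_left₀ (T.singularValues_nonneg i)
      (T.singularValues_antitone (Fin.le_def.1 (Finset.mem_Iic.1 hj))) 2) (sq_nonneg _)
  · simp [← he, e.repr_apply_eq_zero_of_mem_span hv hj]

theorem le_singularValues_of_finrank_eq {V : Submodule 𝕜 E} {i : ℕ} (hV : finrank 𝕜 V = i + 1)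
    {t : ℝ} (ht : ∀ v ∈ V, t * ‖v‖ ≤ ‖T v‖) : t ≤ T.singularValues i := by
  rcases le_or_gt t 0 with ht0 | ht0
  · exact ht0.trans (T.singularValues_nonneg i)
  have hi : i < finrank 𝕜 E := by have := V.finrank_le; omega
  set e := T.isSymmetric_adjoint_comp_self.eigenvectorBasis rfl with he
  set s := Finset.Ici (⟨i, hi⟩ : Fin (finrank 𝕜 E))
  set W := span 𝕜 (Set.range fun j : s => e j)
  obtain ⟨v, hvV, hvW, hv0⟩ : ∃ v ∈ V, v ∈ W ∧ v ≠ 0 := by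
    by_contra! h
    have := Submodule.finrank_add_finrank_le_of_disjoint (Submodule.disjoint_def.2 h)
    rw [hV, e.finrank_span_finset, Fin.card_Ici] at this
    simp only at this
    omega
  have hTv : ‖T v‖ ^ 2 ≤ (T.singularValues i * ‖v‖) ^ 2 := by
    rw [mul_pow, T.norm_apply_sq_eq_sum_singularValues rfl, ← e.repr.norm_map,
      EuclideanSpace.norm_sq_eq, Finset.mul_sum]
    refine Finset.sum_le_sum fun j _ => ?_
    by_cases hj : j ∈ s
    · exact mul_le_mul_of_nonneg_right (pow_le_pow_left₀ (T.singularValues_nonneg j)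
        (T.singularValues_antitone (Fin.le_def.1 (Finset.mem_Ici.1 hj))) 2) (sq_nonneg _)
    · simp [← he, e.repr_apply_eq_zero_of_mem_span hvW hj]
  have : t * ‖v‖ ≤ T.singularValues i * ‖v‖ := (ht v hvV).trans <|
    (pow_le_pow_iff_left₀ (norm_nonneg _)
      (mul_nonneg (T.singularValues_nonneg i) (norm_nonneg v)) two_ne_zero).1 hTv
  exact le_of_mul_le_mul_right this (norm_pos_iff.2 hv0)

theorem sSup_eq_singularValues (i : ℕ) :
    sSup {t : ℝ | ∃ V : Submodule 𝕜 E, finrank 𝕜 V = i + 1 ∧ ∀ v ∈ V, t * ‖v‖ ≤ ‖T v‖} =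
      T.singularValues i := by
  rcases lt_or_ge i (finrank 𝕜 E) with hi | hi
  · exact IsGreatest.csSup_eq ⟨T.exists_finrank_eq_singularValues_mul_norm_le hi,
      fun t ⟨_, hV, ht⟩ => T.le_singularValues_of_finrank_eq hV ht⟩
  · rw [T.singularValues_of_finrank_le hi, ← Real.sSup_empty]
    congr
    refine Set.eq_empty_iff_forall_notMem.2 fun t ⟨V, hV, _⟩ => ?_
    have := V.finrank_le
    omega

theorem singularValues_le_singularValues_adjoint (i : ℕ) :
    T.singularValues i ≤ (adjoint T).singularValues i := by
  rcases (T.singularValues_nonneg i).eq_or_lt with h | hpos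
  · exact h ▸ (adjoint T).singularValues_nonneg i
  have hi : i < finrank 𝕜 E := by
    by_contra! h
    exact hpos.ne' (T.singularValues_of_finrank_le h)
  obtain ⟨V, hV, hσ⟩ := T.exists_finrank_eq_singularValues_mul_norm_le hi
  have hinj : Function.Injective (T.domRestrict V) := by
    rw [← ker_eq_bot, Submodule.eq_bot_iff]
    intro x hx
    have := hσ x x.2
    rw [show T x = 0 from hx, norm_zero] at this
    exact Subtype.ext (norm_le_zero_iff.1 (nonpos_of_mul_nonpos_right this hpos))
  refine (adjoint T).le_singularValues_of_finrank_eq (V := V.map T)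
    (by rw [← range_domRestrict, finrank_range_of_inj hinj, hV]) ?_
  rintro _ ⟨v, hv, rfl⟩
  rcases eq_or_ne v 0 with rfl | hv0
  · simp
  refine le_of_mul_le_mul_right ?_ (norm_pos_iff.2 hv0)
  calc T.singularValues i * ‖T v‖ * ‖v‖ = ‖T v‖ * (T.singularValues i * ‖v‖) := by ring
    _ ≤ ‖T v‖ ^ 2 := by rw [sq]; exact mul_le_mul_of_nonneg_left (hσ v hv) (norm_nonneg _)
    _ = RCLike.re ⟪adjoint T (T v), v⟫_𝕜 := by rw [adjoint_inner_left, inner_self_eq_norm_sq]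
    _ ≤ ‖adjoint T (T v)‖ * ‖v‖ := re_inner_le_norm _ _

theorem singularValues_adjoint : (adjoint T).singularValues = T.singularValues :=
  Finsupp.ext fun i => le_antisymm
    (by simpa using (adjoint T).singularValues_le_singularValues_adjoint i)
    (T.singularValues_le_singularValues_adjoint i)

end LinearMap

theorem sval_succ {α β : Type*} [Fintype α] [Fintype β] [DecidableEq β] (A : Matrix α β ℝ)
    (i : ℕ) : sval A (i + 1) = (toEuclideanLin A).singularValues i :=
  (toEuclideanLin A).sSup_eq_singularValues i

theorem sval_transpose {α β : Type*} [Fintype α] [Fintype β] [DecidableEq α] [DecidableEq β]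
    (A : Matrix α β ℝ) (i : ℕ) : sval Aᵀ (i + 1) = sval A (i + 1) := by
  rw [sval_succ, sval_succ, ← conjTranspose_eq_transpose_of_trivial,
    toEuclideanLin_conjTranspose_eq_adjoint, LinearMap.singularValues_adjoint]

theorem sq_sval_succ {α β : Type*} [Fintype α] [Fintype β] [DecidableEq β] (A : Matrix α β ℝ)
    {N : ℕ} (hN : finrank ℝ (EuclideanSpace ℝ β) = N) (j : Fin N) :
    sval A (j + 1) ^ 2 = (toEuclideanLin A).isSymmetric_adjoint_comp_self.eigenvalues hN j := by
  rw [sval_succ, LinearMap.sq_singularValues_fin _ hN]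

theorem Matrix.conjTranspose_mul_self_mulVec_eq_smul {𝕜 α β : Type*} [RCLike 𝕜]
    [Fintype α] [Fintype β] [DecidableEq α] [DecidableEq β] (A : Matrix α β 𝕜)
    {x : EuclideanSpace 𝕜 β} {c : 𝕜}
    (h : (LinearMap.adjoint (toEuclideanLin A) ∘ₗ toEuclideanLin A) x = c • x) :
    (Aᴴ * A) *ᵥ x.ofLp = c • x.ofLp := by
  rw [← toEuclideanLin_conjTranspose_eq_adjoint] at h
  simpa [Matrix.mulVec_mulVec] using congrArg WithLp.ofLp h

theorem Module.End.finrank_eigenspace_eq_card_of_basis {K M ι : Type*} [Field K]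
    [AddCommGroup M] [Module K M] [Fintype ι] (b : Basis ι K M) (f : ι → K)
    (S : Module.End K M) (hS : ∀ x, S (b x) = f x • b x) (t : K) :
    finrank K (S.eigenspace t) = Nat.card {x // f x = t} := by
  classical
  have hrepr : ∀ v x, b.repr (S v) x = f x * b.repr v x := by
    intro v x
    have : (b.coord x).comp S = f x • b.coord x :=
      b.ext fun y => by by_cases hxy : y = x <;> simp [hS, hxy]
    simpa using LinearMap.congr_fun this v
  have hspan : S.eigenspace t = span K (b '' {x | f x = t}) := by
    refine le_antisymm (fun v hv => ?_) (span_le.2 ?_)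
    · rw [b.mem_span_image]
      intro x hx
      have := congrArg (fun w => b.repr w x) (Module.End.mem_eigenspace_iff.1 hv)
      simp only [hrepr, map_smul, Finsupp.smul_apply, smul_eq_mul] at this
      exact (mul_left_injective₀ (Finsupp.mem_support_iff.1 hx)).eq_iff.1 this
    · rintro _ ⟨x, hx : f x = t, rfl⟩
      exact Module.End.mem_eigenspace_iff.2 (by rw [hS, hx])
  rw [hspan, Set.image_eq_range, Nat.card_eq_fintype_card]
  exact finrank_span_eq_card (b.linearIndependent.comp _ Subtype.val_injective)

namespace Matrix

variable {m n ι κ : Type*} [Fintype m] [Fintype n]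

theorem linearIndependent_vecMulVec_of_orthonormal {u : ι → EuclideanSpace ℝ m}
    {v : κ → EuclideanSpace ℝ n} (hu : Orthonormal ℝ u) (hv : Orthonormal ℝ v) :
    LinearIndependent ℝ fun p : ι × κ => vecMulVec (u p.1).ofLp (v p.2).ofLp := by
  classical
  let Φ : Matrix m n ℝ →ₗ[ℝ] ι × κ → ℝ :=
    { toFun := fun M p => (u p.1).ofLp ⬝ᵥ M *ᵥ (v p.2).ofLp
      map_add' := fun _ _ => by ext; simp [add_mulVec, dotProduct_add]
      map_smul' := fun _ _ => by ext; simp [smul_mulVec, dotProduct_smul] }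
  refine LinearIndependent.of_comp Φ ?_
  convert Pi.linearIndependent_single_one (ι × κ) ℝ with p
  ext q
  have hu' := orthonormal_iff_ite.1 hu p.1 q.1
  have hv' := orthonormal_iff_ite.1 hv q.2 p.2
  simp only [EuclideanSpace.inner_eq_star_dotProduct, star_trivial] at hu' hv'
  simp only [Φ, LinearMap.coe_mk, AddHom.coe_mk, Function.comp_apply, vecMulVec_mulVec,
    dotProduct_smul]
  rw [hu', hv', op_smul_eq_mul, Pi.single_apply]
  grind

theorem finrank_eigenspace_sylvester [DecidableEq m] [DecidableEq n]
    {P : Matrix m m ℝ} {Q : Matrix n n ℝ} (S : Module.End ℝ (Matrix m n ℝ))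
    (hS : ∀ X, S X = P * X + X * Q) (u : OrthonormalBasis m ℝ (EuclideanSpace ℝ m))
    (v : OrthonormalBasis n ℝ (EuclideanSpace ℝ n)) {μ : m → ℝ} {ν : n → ℝ}
    (hu : ∀ a, P *ᵥ (u a).ofLp = μ a • (u a).ofLp)
    (hv : ∀ c, (v c).ofLp ᵥ* Q = ν c • (v c).ofLp) (t : ℝ) :
    finrank ℝ (S.eigenspace t) = Nat.card {p : m × n // μ p.1 + ν p.2 = t} := by
  let b := basisOfLinearIndependentOfCardEqFinrank' _
    (linearIndependent_vecMulVec_of_orthonormal u.orthonormal v.orthonormal)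
    (by rw [Fintype.card_prod, finrank_matrix, finrank_self, mul_one])
  refine Module.End.finrank_eigenspace_eq_card_of_basis b _ S (fun p => ?_) t
  simp only [b, coe_basisOfLinearIndependentOfCardEqFinrank', hS, mul_vecMulVec, vecMulVec_mul,
    hu, hv, smul_vecMulVec, vecMulVec_smul, add_smul]

end Matrix

section finner
variable {α β γ : Type*} [Fintype α] [Fintype β] [Fintype γ]

theorem finner_eq_trace (X Y : Matrix α β ℝ) : finner X Y = trace (Xᵀ * Y) := by
  simp only [finner, trace, diag_apply, mul_apply, transpose_apply]
  exact Finset.sum_comm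

theorem finner_mul_right (X : Matrix α β ℝ) (R : Matrix β γ ℝ) (B : Matrix α γ ℝ) :
    finner (X * R) B = finner X (B * Rᵀ) := by
  rw [finner_eq_trace, finner_eq_trace, transpose_mul, Matrix.mul_assoc, trace_mul_comm,
    ← Matrix.mul_assoc, trace_mul_comm, ← Matrix.mul_assoc]

theorem finner_mul_left (L : Matrix α β ℝ) (Y : Matrix β γ ℝ) (B : Matrix α γ ℝ) :
    finner (L * Y) B = finner Y (Lᵀ * B) := by
  rw [finner_eq_trace, finner_eq_trace, transpose_mul, Matrix.mul_assoc]

theorem finner_single_one_left [DecidableEq α] [DecidableEq β] (i : α) (j : β)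
    (Y : Matrix α β ℝ) :
    finner (single i j 1) Y = Y i j := by
  simp [finner, single_apply, ite_and]

theorem finner_zero_left (Y : Matrix α β ℝ) : finner 0 Y = 0 := by
  simp [finner]

theorem eq_of_forall_finner_eq [DecidableEq α] [DecidableEq β] {Y Z : Matrix α β ℝ}
    (h : ∀ X, finner X Y = finner X Z) : Y = Z := by
  ext i j
  simpa [finner_single_one_left] using h (single i j 1)

end finner

theorem eq_transpose_mul_of_finner_adjoint {α κ β : Type*} [Fintype α] [Fintype κ] [Fintype β]
    [DecidableEq α] [DecidableEq κ] [DecidableEq β] {L : Matrix α κ ℝ} {R : Matrix κ β ℝ}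
    {T : Matrix α κ ℝ × Matrix κ β ℝ → Matrix α β ℝ}
    {Tstar : Matrix α β ℝ → Matrix α κ ℝ × Matrix κ β ℝ}
    (hT : ∀ p, T p = p.1 * R + L * p.2)
    (hTstar : ∀ p B, finner (T p) B = finner p.1 (Tstar B).1 + finner p.2 (Tstar B).2)
    (B : Matrix α β ℝ) : Tstar B = (B * Rᵀ, Lᵀ * B) :=
  Prod.ext
    (eq_of_forall_finner_eq fun X => by
      simpa [hT, finner_mul_right, finner_zero_left] using (hTstar (X, 0) B).symm)
    (eq_of_forall_finner_eq fun Y => by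
      simpa [hT, finner_mul_left, finner_zero_left] using (hTstar (0, Y) B).symm)

/-- For the derivative `T(L̇,Ṙ) = L̇R + LṘ` of the two-factor matrix
multiplication map, the multiset of eigenvalues of `T ∘ T*` (adjoint w.r.t. the Frobenius
inner products) is `{σ_i(L)² + σ_j(R)² : 1 ≤ i ≤ m, 1 ≤ j ≤ n}`. -/
theorem stmt8 {m k n : ℕ}
    (L : Matrix (Fin m) (Fin k) ℝ) (R : Matrix (Fin k) (Fin n) ℝ)
    (T : Matrix (Fin m) (Fin k) ℝ × Matrix (Fin k) (Fin n) ℝ →ₗ[ℝ] Matrix (Fin m) (Fin n) ℝ)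
    (hT : ∀ p, T p = p.1 * R + L * p.2)
    (Tstar : Matrix (Fin m) (Fin n) ℝ →ₗ[ℝ]
      Matrix (Fin m) (Fin k) ℝ × Matrix (Fin k) (Fin n) ℝ)
    (hTstar : ∀ p B, finner (T p) B = finner p.1 (Tstar B).1 + finner p.2 (Tstar B).2) :
    ∀ t : ℝ,
      Module.finrank ℝ (Module.End.eigenspace (T ∘ₗ Tstar) t) =
        Nat.card {ij : Fin m × Fin n //
          sval L (ij.1.1 + 1) ^ 2 + sval R (ij.2.1 + 1) ^ 2 = t} := by
  intro t
  have hTT (B : Matrix (Fin m) (Fin n) ℝ) : (T ∘ₗ Tstar) B = L * Lᵀ * B + B * (Rᵀ * R) := by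
    rw [LinearMap.comp_apply, hT, eq_transpose_mul_of_finner_adjoint hT hTstar,
      Matrix.mul_assoc, Matrix.mul_assoc, add_comm]
  set hL := (toEuclideanLin Lᵀ).isSymmetric_adjoint_comp_self
  set hR := (toEuclideanLin R).isSymmetric_adjoint_comp_self
  have hm : finrank ℝ (EuclideanSpace ℝ (Fin m)) = m := finrank_euclideanSpace_fin
  have hn : finrank ℝ (EuclideanSpace ℝ (Fin n)) = n := finrank_euclideanSpace_fin
  rw [finrank_eigenspace_sylvester _ hTT (hL.eigenvectorBasis hm) (hR.eigenvectorBasis hn)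
    (fun a => by
      simpa [conjTranspose_eq_transpose_of_trivial] using
        Lᵀ.conjTranspose_mul_self_mulVec_eq_smul (hL.apply_eigenvectorBasis hm a))
    (fun c => by
      rw [← mulVec_transpose, transpose_mul, transpose_transpose]
      simpa [conjTranspose_eq_transpose_of_trivial] using
        R.conjTranspose_mul_self_mulVec_eq_smul (hR.apply_eigenvectorBasis hn c)) t]
  simp only [← sval_transpose L, sq_sval_succ _ hm, sq_sval_succ _ hn]
end

section
/- Let L ∈ ℝ^{m×k} and R ∈ ℝ^{k×n} both have rank k, and let T : ℝ^{m×k} × ℝ^{k×n} → ℝ^{m×n} be the linear map T(L̇, Ṙ) = L̇R + LṘ. Then the rank of T equals mn − (m−k)(n−k); in particular, the rank of T is the same for all full-rank L and R. -/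
open Matrix Module

/-- Full column rank implies `mulVecLin` is injective. -/
lemma aux_mulVec_inj {p q : ℕ} (M : Matrix (Fin p) (Fin q) ℝ) (h : M.rank = q) :
    Function.Injective M.mulVecLin := by
  rw [← LinearMap.ker_eq_bot]
  have h1 := LinearMap.finrank_range_add_finrank_ker M.mulVecLin
  have h2 : finrank ℝ (Fin q → ℝ) = q := by simp
  rw [h2] at h1
  have h3 : finrank ℝ (LinearMap.range M.mulVecLin) = q := h
  have hker : finrank ℝ (LinearMap.ker M.mulVecLin) = 0 := by omega
  exact Submodule.finrank_eq_zero.mp hker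

/-- Left cancellation for full column rank matrices. -/
lemma aux_left_cancel {p q r : ℕ} (M : Matrix (Fin p) (Fin q) ℝ) (h : M.rank = q)
    (A : Matrix (Fin q) (Fin r) ℝ) (hA : M * A = 0) : A = 0 := by
  ext i j
  have hcol : M.mulVecLin (fun l => A l j) = 0 := by
    ext i'
    have := congrFun (congrFun hA i') j
    simpa [Matrix.mul_apply, Matrix.mulVec, dotProduct] using this
  have := aux_mulVec_inj M h (a₁ := fun l => A l j) (a₂ := 0) (by simpa using hcol)
  exact congrFun this i

/-- Right cancellation for full row rank matrices. -/
lemma aux_right_cancel {p q r : ℕ} (M : Matrix (Fin p) (Fin q) ℝ) (h : M.rank = p)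
    (A : Matrix (Fin r) (Fin p) ℝ) (hA : A * M = 0) : A = 0 := by
  have hT : Mᵀ.rank = p := by rwa [Matrix.rank_transpose]
  have h0 : Mᵀ * Aᵀ = 0 := by rw [← Matrix.transpose_mul, hA, Matrix.transpose_zero]
  have h1 := aux_left_cancel Mᵀ hT Aᵀ h0
  calc A = Aᵀᵀ := (Matrix.transpose_transpose A).symm
    _ = 0 := by rw [h1]; simp

/-- Full column rank gives a left inverse. -/
lemma aux_left_inv {p q : ℕ} (M : Matrix (Fin p) (Fin q) ℝ) (h : M.rank = q) :
    ∃ M' : Matrix (Fin q) (Fin p) ℝ, M' * M = 1 := by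
  set G := Mᵀ * M with hG
  have hGrank : G.rank = q := by rw [hG, Matrix.rank_transpose_mul_self, h]
  have hGunit : IsUnit G := by
    rw [← Matrix.mulVec_injective_iff_isUnit]
    exact aux_mulVec_inj G hGrank
  refine ⟨G⁻¹ * Mᵀ, ?_⟩
  rw [Matrix.mul_assoc, ← hG, Matrix.nonsing_inv_mul G ((Matrix.isUnit_iff_isUnit_det G).mp hGunit)]

/-- For full-rank factors `L` and `R`, the rank of the linear map
`T(L̇,Ṙ) = L̇R + LṘ` equals `mn − (m−k)(n−k)`; in particular it does not depend on
the choice of the full-rank factors. -/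
theorem stmt9 {m k n : ℕ}
    (L : Matrix (Fin m) (Fin k) ℝ) (R : Matrix (Fin k) (Fin n) ℝ)
    (hL : L.rank = k) (hR : R.rank = k)
    (T : Matrix (Fin m) (Fin k) ℝ × Matrix (Fin k) (Fin n) ℝ →ₗ[ℝ] Matrix (Fin m) (Fin n) ℝ)
    (hT : ∀ p, T p = p.1 * R + L * p.2) :
    Module.finrank ℝ (LinearMap.range T) = m * n - (m - k) * (n - k) := by
  have hkm : k ≤ m := hL ▸ L.rank_le_height
  have hkn : k ≤ n := hR ▸ R.rank_le_width
  obtain ⟨L', hL'⟩ := aux_left_inv L hL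
  -- the map  X ↦ (L*X, -(X*R)), whose range is the kernel of T
  let S : Matrix (Fin k) (Fin k) ℝ →ₗ[ℝ]
      Matrix (Fin m) (Fin k) ℝ × Matrix (Fin k) (Fin n) ℝ :=
    { toFun := fun X => (L * X, -(X * R))
      map_add' := by
        intro X Y
        simp only [Matrix.mul_add, Matrix.add_mul, Prod.mk_add_mk, neg_add]
      map_smul' := by
        intro c X
        simp [Matrix.mul_smul, Matrix.smul_mul] }
  have hker : LinearMap.ker T = LinearMap.range S := by
    ext ⟨P, Q⟩
    simp only [LinearMap.mem_ker, LinearMap.mem_range, hT]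
    constructor
    · intro h0
      have hLQ : L * Q = -(P * R) := eq_neg_of_add_eq_zero_right h0
      have hPR : P * R = -(L * Q) := eq_neg_of_add_eq_zero_left h0
      refine ⟨L' * P, ?_⟩
      have hXR : (L' * P) * R = -Q := by
        rw [Matrix.mul_assoc, hPR, Matrix.mul_neg, ← Matrix.mul_assoc, hL', Matrix.one_mul]
      have hLX : L * (L' * P) = P := by
        have hsub : (P - L * (L' * P)) * R = 0 := by
          rw [Matrix.sub_mul, Matrix.mul_assoc, hXR, Matrix.mul_neg, hLQ, neg_neg, sub_self]
        have := aux_right_cancel R hR _ hsub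
        rwa [sub_eq_zero, eq_comm] at this
      show (L * (L' * P), -((L' * P) * R)) = (P, Q)
      rw [hXR, hLX, neg_neg]
    · rintro ⟨X, hX⟩
      have hP : L * X = P := congrArg Prod.fst hX
      have hQ : -(X * R) = Q := congrArg Prod.snd hX
      rw [← hP, ← hQ, Matrix.mul_neg, Matrix.mul_assoc, add_neg_cancel]
  have hSinj : Function.Injective S := by
    rw [← LinearMap.ker_eq_bot, LinearMap.ker_eq_bot']
    intro X hX
    have h1 : L * X = 0 := congrArg Prod.fst hX
    exact aux_left_cancel L hL X h1
  have hkerdim : finrank ℝ (LinearMap.ker T) = k * k := by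
    rw [hker, LinearMap.finrank_range_of_inj hSinj]
    simp [Module.finrank_matrix]
  have hrn := LinearMap.finrank_range_add_finrank_ker T
  have hdom : finrank ℝ (Matrix (Fin m) (Fin k) ℝ × Matrix (Fin k) (Fin n) ℝ)
      = m * k + k * n := by
    simp [Module.finrank_matrix]
  rw [hdom, hkerdim] at hrn
  obtain ⟨a, rfl⟩ := Nat.exists_eq_add_of_le hkm
  obtain ⟨b, rfl⟩ := Nat.exists_eq_add_of_le hkn
  have e2 : (k + a) * k + k * (k + b) = (k * k + a * k + k * b) + k * k := by ring
  rw [e2] at hrn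
  have hX : finrank ℝ (LinearMap.range T) = k * k + a * k + k * b :=
    Nat.add_right_cancel hrn
  rw [hX, Nat.add_sub_cancel_left, Nat.add_sub_cancel_left]
  have e1 : (k + a) * (k + b) = (k * k + a * k + k * b) + a * b := by ring
  rw [e1, Nat.add_sub_cancel]
end

section
/- Let X ∈ ℝ^{m×n} have rank k and suppose X = LR where L ∈ ℝ^{m×k} has rank k and R ∈ ℝ^{k×n} has rank k. Then min{ σ_k(L), σ_k(R) } ≤ sqrt( σ_k(X) ); that is, the k-th largest singular value of L or of R is at most the square root of the k-th largest singular value of X. -/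
lemma sval_zero' {α β : Type*} [Fintype α] [Fintype β] [DecidableEq β]
    (A : Matrix α β ℝ) : sval A 0 = 0 := by
  have hset : {t : ℝ | ∃ V : Submodule ℝ (EuclideanSpace ℝ β), Module.finrank ℝ V = 0 ∧
      ∀ v ∈ V, t * ‖v‖ ≤ ‖Matrix.toEuclideanLin A v‖} = Set.univ := by
    ext t
    simp only [Set.mem_setOf_eq, Set.mem_univ, iff_true]
    refine ⟨⊥, finrank_bot ℝ _, ?_⟩
    intro v hv
    rw [Submodule.mem_bot] at hv
    simp [hv]
  rw [sval, hset, Real.sSup_univ]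

/-- If `X = LR` with `X` of rank `k` and full-rank factors `L`, `R`,
then `min {σ_k(L), σ_k(R)} ≤ sqrt (σ_k(X))`. -/
theorem stmt12 {m k n : ℕ}
    (X : Matrix (Fin m) (Fin n) ℝ) (hX : X.rank = k)
    (L : Matrix (Fin m) (Fin k) ℝ) (R : Matrix (Fin k) (Fin n) ℝ)
    (hL : L.rank = k) (hR : R.rank = k)
    (hXLR : X = L * R) :
    min (sval L k) (sval R k) ≤ Real.sqrt (sval X k) := by
  set s := min (sval L k) (sval R k) with hs_def
  rcases le_or_gt s 0 with hs | hs
  · exact hs.trans (Real.sqrt_nonneg _)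
  -- s > 0
  have hk : k ≠ 0 := by
    rintro rfl
    have : s ≤ 0 := by
      rw [hs_def, sval_zero', sval_zero']
      simp
    linarith
  set SX := {t : ℝ | ∃ V : Submodule ℝ (EuclideanSpace ℝ (Fin n)), Module.finrank ℝ V = k ∧
      ∀ v ∈ V, t * ‖v‖ ≤ ‖Matrix.toEuclideanLin X v‖} with hSX_def
  set SL := {t : ℝ | ∃ V : Submodule ℝ (EuclideanSpace ℝ (Fin k)), Module.finrank ℝ V = k ∧
      ∀ v ∈ V, t * ‖v‖ ≤ ‖Matrix.toEuclideanLin L v‖} with hSL_def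
  set SR := {t : ℝ | ∃ V : Submodule ℝ (EuclideanSpace ℝ (Fin n)), Module.finrank ℝ V = k ∧
      ∀ v ∈ V, t * ‖v‖ ≤ ‖Matrix.toEuclideanLin R v‖} with hSR_def
  have hsvalX : sval X k = sSup SX := rfl
  have hsvalL : sval L k = sSup SL := rfl
  have hsvalR : sval R k = sSup SR := rfl
  -- SX is bounded above
  set C := ‖(LinearMap.toContinuousLinearMap (Matrix.toEuclideanLin X))‖ with hC_def
  have hbdd : BddAbove SX := by
    refine ⟨C, ?_⟩
    rintro t ⟨V, hV, hVt⟩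
    have hVne : V ≠ ⊥ := by
      intro h
      rw [h] at hV
      simp at hV
      exact hk hV.symm
    obtain ⟨v, hvV, hv⟩ := (Submodule.ne_bot_iff V).mp hVne
    have h1 := hVt v hvV
    have h2 : ‖Matrix.toEuclideanLin X v‖ ≤ C * ‖v‖ := by
      have := ContinuousLinearMap.le_opNorm (LinearMap.toContinuousLinearMap (Matrix.toEuclideanLin X)) v
      simpa using this
    have hvpos : (0:ℝ) < ‖v‖ := norm_pos_iff.mpr hv
    nlinarith
  -- product of elements of SL and SR lies in SX
  have hprod : ∀ a ∈ SL, ∀ b ∈ SR, 0 ≤ a → a * b ∈ SX := by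
    rintro a ⟨W, hW, hWa⟩ b ⟨V, hV, hVb⟩ ha
    have hWtop : W = ⊤ := by
      apply Submodule.eq_top_of_finrank_eq
      rw [hW, finrank_euclideanSpace_fin]
    refine ⟨V, hV, ?_⟩
    intro v hv
    have h1 : b * ‖v‖ ≤ ‖Matrix.toEuclideanLin R v‖ := hVb v hv
    have h2 : a * ‖Matrix.toEuclideanLin R v‖ ≤ ‖Matrix.toEuclideanLin L (Matrix.toEuclideanLin R v)‖ := by
      apply hWa
      rw [hWtop]; trivial
    have h3 : Matrix.toEuclideanLin X v = Matrix.toEuclideanLin L (Matrix.toEuclideanLin R v) := by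
      rw [hXLR]
      simp [Matrix.toEuclideanLin_apply, Matrix.mulVec_mulVec]
    rw [h3]
    calc a * b * ‖v‖ = a * (b * ‖v‖) := by ring
      _ ≤ a * ‖Matrix.toEuclideanLin R v‖ := by
          exact mul_le_mul_of_nonneg_left h1 ha
      _ ≤ _ := h2
  -- SL and SR are nonempty
  have hSLne : SL.Nonempty := by
    rcases Set.eq_empty_or_nonempty SL with h | h
    · exfalso
      have : sval L k = 0 := by rw [hsvalL, h, Real.sSup_empty]
      have hle : s ≤ sval L k := min_le_left _ _
      linarith
    · exact h
  have hSRne : SR.Nonempty := by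
    rcases Set.eq_empty_or_nonempty SR with h | h
    · exfalso
      have : sval R k = 0 := by rw [hsvalR, h, Real.sSup_empty]
      have hle : s ≤ sval R k := min_le_right _ _
      linarith
    · exact h
  -- main inequality : s^2 ≤ sval X k
  have hmain : s ^ 2 ≤ sval X k := by
    apply le_of_forall_pos_le_add
    intro ε hε
    set δ := min (s / 2) (ε / (2 * s)) with hδ_def
    have hδpos : 0 < δ := lt_min (by linarith) (by positivity)
    have hδlt : δ < s := lt_of_le_of_lt (min_le_left _ _) (by linarith)
    have hcL : s - δ < sSup SL := by
      have : s ≤ sval L k := min_le_left _ _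
      rw [hsvalL] at this; linarith
    have hcR : s - δ < sSup SR := by
      have : s ≤ sval R k := min_le_right _ _
      rw [hsvalR] at this; linarith
    obtain ⟨a, haSL, ha⟩ := exists_lt_of_lt_csSup hSLne hcL
    obtain ⟨b, hbSR, hb⟩ := exists_lt_of_lt_csSup hSRne hcR
    have hapos : 0 < a := lt_of_lt_of_le (by linarith) ha.le
    have hbpos : 0 < b := lt_of_lt_of_le (by linarith) hb.le
    have hmem : a * b ∈ SX := hprod a haSL b hbSR hapos.le
    have hX : a * b ≤ sval X k := by
      rw [hsvalX]
      exact le_csSup hbdd hmem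
    have hab : (s - δ) ^ 2 ≤ a * b := by nlinarith
    have hδε : 2 * s * δ ≤ ε := by
      have : δ ≤ ε / (2 * s) := min_le_right _ _
      calc 2 * s * δ ≤ 2 * s * (ε / (2 * s)) := by nlinarith
        _ = ε := by field_simp
    nlinarith
  -- conclude
  rw [show Real.sqrt (sval X k) = Real.sqrt (sval X k) from rfl]
  have h0X : 0 ≤ sval X k := le_trans (by positivity) hmain
  exact (Real.le_sqrt hs.le h0X).mpr hmain
end

section
/- Let Uᵢ, Vᵢ ∈ St(nᵢ, kᵢ) for i = 1, 2, 3 and let S, T ∈ ℝ^{k₁×k₂×k₃} both have full multilinear rank. If (U₁ ⊗ U₂ ⊗ U₃)·S = (V₁ ⊗ V₂ ⊗ V₃)·T, then there exist orthogonal matrices Qᵢ ∈ O(kᵢ), i = 1, 2, 3, such that Vᵢ = UᵢQᵢᵀ for each i and T = (Q₁ ⊗ Q₂ ⊗ Q₃)·S. Conversely, for any orthogonal Qᵢ ∈ O(kᵢ), the tuple (U₁Q₁ᵀ, U₂Q₂ᵀ, U₃Q₃ᵀ, (Q₁ ⊗ Q₂ ⊗ Q₃)·S) yields the same tensor (U₁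 ⊗ U₂ ⊗ U₃)·S. -/
open Matrix Kronecker

/-- The multilinear (Tucker) action `(A ⊗ B ⊗ C)·S` of three matrices on a tensor. -/
def tact {n₁ n₂ n₃ k₁ k₂ k₃ : ℕ} (A : Matrix (Fin n₁) (Fin k₁) ℝ)
    (B : Matrix (Fin n₂) (Fin k₂) ℝ) (C : Matrix (Fin n₃) (Fin k₃) ℝ)
    (S : Fin k₁ → Fin k₂ → Fin k₃ → ℝ) : Fin n₁ → Fin n₂ → Fin n₃ → ℝ :=
  fun a b c => ∑ i, ∑ j, ∑ l, A a i * B b j * C c l * S i j l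

/-- The mode-1 flattening of a third-order tensor. -/
def flat1 {k₁ k₂ k₃ : ℕ} (S : Fin k₁ → Fin k₂ → Fin k₃ → ℝ) :
    Matrix (Fin k₁) (Fin k₂ × Fin k₃) ℝ := Matrix.of fun a p => S a p.1 p.2

/-- The mode-2 flattening of a third-order tensor. -/
def flat2 {k₁ k₂ k₃ : ℕ} (S : Fin k₁ → Fin k₂ → Fin k₃ → ℝ) :
    Matrix (Fin k₂) (Fin k₁ × Fin k₃) ℝ := Matrix.of fun b p => S p.1 b p.2

/-- The mode-3 flattening of a third-order tensor. -/
def flat3 {k₁ k₂ k₃ : ℕ} (S : Fin k₁ → Fin k₂ → Fin k₃ → ℝ) :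
    Matrix (Fin k₃) (Fin k₁ × Fin k₂) ℝ := Matrix.of fun c p => S p.1 p.2 c

private lemma sum_rot {α : Type*} [AddCommMonoid α] {k₁ k₂ k₃ : ℕ}
    (f : Fin k₁ → Fin k₂ → Fin k₃ → α) :
    ∑ i, ∑ j, ∑ l, f i j l = ∑ j, ∑ l, ∑ i, f i j l := by
  rw [Finset.sum_comm]
  exact Finset.sum_congr rfl fun _ _ => Finset.sum_comm

private lemma flat1_tact {n₁ n₂ n₃ k₁ k₂ k₃ : ℕ} (A : Matrix (Fin n₁) (Fin k₁) ℝ)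
    (B : Matrix (Fin n₂) (Fin k₂) ℝ) (C : Matrix (Fin n₃) (Fin k₃) ℝ)
    (S : Fin k₁ → Fin k₂ → Fin k₃ → ℝ) :
    flat1 (tact A B C S) = A * flat1 S * (B ⊗ₖ C)ᵀ := by
  ext a p
  obtain ⟨b, c⟩ := p
  simp only [flat1, tact, of_apply, mul_apply, transpose_apply, kroneckerMap_apply,
    Fintype.sum_prod_type, Finset.sum_mul, Finset.mul_sum]
  rw [sum_rot]
  exact Finset.sum_congr rfl fun j _ => Finset.sum_congr rfl fun l _ =>
    Finset.sum_congr rfl fun i _ => by ring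

private lemma flat2_tact {n₁ n₂ n₃ k₁ k₂ k₃ : ℕ} (A : Matrix (Fin n₁) (Fin k₁) ℝ)
    (B : Matrix (Fin n₂) (Fin k₂) ℝ) (C : Matrix (Fin n₃) (Fin k₃) ℝ)
    (S : Fin k₁ → Fin k₂ → Fin k₃ → ℝ) :
    flat2 (tact A B C S) = B * flat2 S * (A ⊗ₖ C)ᵀ := by
  ext b p
  obtain ⟨a, c⟩ := p
  simp only [flat2, tact, of_apply, mul_apply, transpose_apply, kroneckerMap_apply,
    Fintype.sum_prod_type, Finset.sum_mul, Finset.mul_sum]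
  rw [show (∑ i : Fin k₁, ∑ j : Fin k₂, ∑ l : Fin k₃, A a i * B b j * C c l * S i j l)
      = ∑ i : Fin k₁, ∑ l : Fin k₃, ∑ j : Fin k₂, A a i * B b j * C c l * S i j l from
    Finset.sum_congr rfl fun _ _ => Finset.sum_comm]
  exact Finset.sum_congr rfl fun i _ => Finset.sum_congr rfl fun l _ =>
    Finset.sum_congr rfl fun j _ => by ring

private lemma flat3_tact {n₁ n₂ n₃ k₁ k₂ k₃ : ℕ} (A : Matrix (Fin n₁) (Fin k₁) ℝ)
    (B : Matrix (Fin n₂) (Fin k₂) ℝ) (C : Matrix (Fin n₃) (Fin k₃) ℝ)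
    (S : Fin k₁ → Fin k₂ → Fin k₃ → ℝ) :
    flat3 (tact A B C S) = C * flat3 S * (A ⊗ₖ B)ᵀ := by
  ext c p
  obtain ⟨a, b⟩ := p
  simp only [flat3, tact, of_apply, mul_apply, transpose_apply, kroneckerMap_apply,
    Fintype.sum_prod_type, Finset.sum_mul, Finset.mul_sum]
  exact Finset.sum_congr rfl fun i _ => Finset.sum_congr rfl fun j _ =>
    Finset.sum_congr rfl fun l _ => by ring

private lemma flat1_inj {k₁ k₂ k₃ : ℕ} {S T : Fin k₁ → Fin k₂ → Fin k₃ → ℝ}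
    (h : flat1 S = flat1 T) : S = T := by
  funext a b c
  exact congrFun (congrFun h a) (b, c)

private lemma rightInv {k : ℕ} {m : Type*} [Fintype m]
    (M : Matrix (Fin k) m ℝ) (h : M.rank = k) : ∃ R : Matrix m (Fin k) ℝ, M * R = 1 := by
  have hG : (M * Mᵀ).rank = k := by rw [Matrix.rank_self_mul_transpose, h]
  have hUnit : IsUnit (M * Mᵀ) := by
    rw [← Matrix.mulVec_surjective_iff_isUnit]
    have hrange : LinearMap.range (M * Mᵀ).mulVecLin = ⊤ := by
      apply Submodule.eq_top_of_finrank_eq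
      rw [Matrix.rank] at hG
      rw [hG]
      simp
    intro v
    obtain ⟨w, hw⟩ := LinearMap.range_eq_top.mp hrange v
    exact ⟨w, hw⟩
  refine ⟨Mᵀ * (M * Mᵀ)⁻¹, ?_⟩
  rw [← Matrix.mul_assoc M Mᵀ _, Matrix.mul_nonsing_inv]
  exact (Matrix.isUnit_iff_isUnit_det _).mp hUnit

/-- Orthogonality of a Kronecker product of orthonormal-column matrices. -/
private lemma kron_orth {n₂ n₃ k₂ k₃ : ℕ}
    (B : Matrix (Fin n₂) (Fin k₂) ℝ) (C : Matrix (Fin n₃) (Fin k₃) ℝ)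
    (hB : Bᵀ * B = 1) (hC : Cᵀ * C = 1) : (B ⊗ₖ C)ᵀ * (B ⊗ₖ C) = 1 := by
  rw [← kroneckerMap_transpose, ← Matrix.mul_kronecker_mul, hB, hC, Matrix.one_kronecker_one]

/-- Key factorization lemma. -/
private lemma factor {n k : ℕ} {m p : Type*} [Fintype m] [Fintype p] [DecidableEq m]
    (U V : Matrix (Fin n) (Fin k) ℝ) (hU : Uᵀ * U = 1)
    (MS MT : Matrix (Fin k) m ℝ) (WU WV : Matrix p m ℝ)
    (hWV : WVᵀ * WV = 1) (hMT : MT.rank = k)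
    (heq : U * MS * WUᵀ = V * MT * WVᵀ) : V = U * (Uᵀ * V) := by
  obtain ⟨R, hR⟩ := rightInv MT hMT
  have h2 : V * MT = U * (MS * (WUᵀ * WV)) := by
    calc V * MT = V * MT * (WVᵀ * WV) := by rw [hWV, Matrix.mul_one]
    _ = V * MT * WVᵀ * WV := by simp only [Matrix.mul_assoc]
    _ = U * MS * WUᵀ * WV := by rw [heq]
    _ = U * (MS * (WUᵀ * WV)) := by simp only [Matrix.mul_assoc]
  have h3 : V = U * (MS * (WUᵀ * WV) * R) := by
    calc V = V * (MT * R) := by rw [hR, Matrix.mul_one]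
    _ = V * MT * R := by simp only [Matrix.mul_assoc]
    _ = U * (MS * (WUᵀ * WV)) * R := by rw [h2]
    _ = U * (MS * (WUᵀ * WV) * R) := by simp only [Matrix.mul_assoc]
  have h4 : Uᵀ * V = MS * (WUᵀ * WV) * R := by
    rw [h3, ← Matrix.mul_assoc, hU, Matrix.one_mul]
  rw [h4, ← h3]

/-- From mutual column-space containment, `Q = VᵀU` is orthogonal with `V = U Qᵀ`. -/
private lemma orth_of_factor {n k : ℕ} (U V : Matrix (Fin n) (Fin k) ℝ)
    (hU : Uᵀ * U = 1) (hV : Vᵀ * V = 1)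
    (hA : V = U * (Uᵀ * V)) (hB : U = V * (Vᵀ * U)) :
    (Vᵀ * U)ᵀ * (Vᵀ * U) = 1 ∧ V = U * (Vᵀ * U)ᵀ := by
  constructor
  · have step : (V * (Vᵀ * U))ᵀ * (V * (Vᵀ * U)) = (Vᵀ * U)ᵀ * (Vᵀ * U) := by
      rw [Matrix.transpose_mul V (Vᵀ * U), Matrix.mul_assoc ((Vᵀ * U)ᵀ) Vᵀ (V * (Vᵀ * U)),
        ← Matrix.mul_assoc Vᵀ V (Vᵀ * U), hV, Matrix.one_mul]
    rw [← step, ← hB, hU]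
  · rw [Matrix.transpose_mul, Matrix.transpose_transpose]
    exact hA

/-- Any two orthogonal Tucker decompositions with full multilinear rank
cores of the same tensor are related by orthogonal matrices `Qᵢ ∈ O(kᵢ)`; conversely any
such orthogonal matrices produce another orthogonal Tucker decomposition of the tensor. -/
theorem stmt15 {n₁ n₂ n₃ k₁ k₂ k₃ : ℕ}
    (U₁ V₁ : Matrix (Fin n₁) (Fin k₁) ℝ) (U₂ V₂ : Matrix (Fin n₂) (Fin k₂) ℝ)
    (U₃ V₃ : Matrix (Fin n₃) (Fin k₃) ℝ)
    (hU₁ : U₁ᵀ * U₁ = 1) (hU₂ : U₂ᵀ * U₂ = 1) (hU₃ : U₃ᵀ * U₃ = 1)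
    (hV₁ : V₁ᵀ * V₁ = 1) (hV₂ : V₂ᵀ * V₂ = 1) (hV₃ : V₃ᵀ * V₃ = 1)
    (S T : Fin k₁ → Fin k₂ → Fin k₃ → ℝ)
    (hS₁ : (flat1 S).rank = k₁) (hS₂ : (flat2 S).rank = k₂) (hS₃ : (flat3 S).rank = k₃)
    (hT₁ : (flat1 T).rank = k₁) (hT₂ : (flat2 T).rank = k₂) (hT₃ : (flat3 T).rank = k₃) :
    (tact U₁ U₂ U₃ S = tact V₁ V₂ V₃ T →
      ∃ (Q₁ : Matrix (Fin k₁) (Fin k₁) ℝ) (Q₂ : Matrix (Fin k₂) (Fin k₂) ℝ)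
        (Q₃ : Matrix (Fin k₃) (Fin k₃) ℝ),
        Q₁ᵀ * Q₁ = 1 ∧ Q₂ᵀ * Q₂ = 1 ∧ Q₃ᵀ * Q₃ = 1 ∧
        V₁ = U₁ * Q₁ᵀ ∧ V₂ = U₂ * Q₂ᵀ ∧ V₃ = U₃ * Q₃ᵀ ∧
        T = tact Q₁ Q₂ Q₃ S) ∧
    (∀ (Q₁ : Matrix (Fin k₁) (Fin k₁) ℝ) (Q₂ : Matrix (Fin k₂) (Fin k₂) ℝ)
        (Q₃ : Matrix (Fin k₃) (Fin k₃) ℝ),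
      Q₁ᵀ * Q₁ = 1 → Q₂ᵀ * Q₂ = 1 → Q₃ᵀ * Q₃ = 1 →
      tact (U₁ * Q₁ᵀ) (U₂ * Q₂ᵀ) (U₃ * Q₃ᵀ) (tact Q₁ Q₂ Q₃ S) = tact U₁ U₂ U₃ S) := by
  constructor
  · intro hEq
    have e1 : U₁ * flat1 S * (U₂ ⊗ₖ U₃)ᵀ = V₁ * flat1 T * (V₂ ⊗ₖ V₃)ᵀ := by
      rw [← flat1_tact, ← flat1_tact, hEq]
    have e2 : U₂ * flat2 S * (U₁ ⊗ₖ U₃)ᵀ = V₂ * flat2 T * (V₁ ⊗ₖ V₃)ᵀ := by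
      rw [← flat2_tact, ← flat2_tact, hEq]
    have e3 : U₃ * flat3 S * (U₁ ⊗ₖ U₂)ᵀ = V₃ * flat3 T * (V₁ ⊗ₖ V₂)ᵀ := by
      rw [← flat3_tact, ← flat3_tact, hEq]
    have hA₁ := factor U₁ V₁ hU₁ (flat1 S) (flat1 T) _ _ (kron_orth _ _ hV₂ hV₃) hT₁ e1
    have hB₁ := factor V₁ U₁ hV₁ (flat1 T) (flat1 S) _ _ (kron_orth _ _ hU₂ hU₃) hS₁ e1.symm
    have hA₂ := factor U₂ V₂ hU₂ (flat2 S) (flat2 T) _ _ (kron_orth _ _ hV₁ hV₃) hT₂ e2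
    have hB₂ := factor V₂ U₂ hV₂ (flat2 T) (flat2 S) _ _ (kron_orth _ _ hU₁ hU₃) hS₂ e2.symm
    have hA₃ := factor U₃ V₃ hU₃ (flat3 S) (flat3 T) _ _ (kron_orth _ _ hV₁ hV₂) hT₃ e3
    have hB₃ := factor V₃ U₃ hV₃ (flat3 T) (flat3 S) _ _ (kron_orth _ _ hU₁ hU₂) hS₃ e3.symm
    obtain ⟨hQ₁, hVQ₁⟩ := orth_of_factor U₁ V₁ hU₁ hV₁ hA₁ hB₁
    obtain ⟨hQ₂, hVQ₂⟩ := orth_of_factor U₂ V₂ hU₂ hV₂ hA₂ hB₂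
    obtain ⟨hQ₃, hVQ₃⟩ := orth_of_factor U₃ V₃ hU₃ hV₃ hA₃ hB₃
    refine ⟨V₁ᵀ * U₁, V₂ᵀ * U₂, V₃ᵀ * U₃, hQ₁, hQ₂, hQ₃, hVQ₁, hVQ₂, hVQ₃, ?_⟩
    apply flat1_inj
    rw [flat1_tact]
    have hK2 : ((V₂ᵀ * U₂) ⊗ₖ (V₃ᵀ * U₃))ᵀ = (U₂ ⊗ₖ U₃)ᵀ * (V₂ ⊗ₖ V₃) := by
      rw [Matrix.mul_kronecker_mul, Matrix.transpose_mul, kroneckerMap_transpose,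
        Matrix.transpose_transpose]
    rw [hK2]
    have heq2 : V₁ᵀ * (V₁ * flat1 T * (V₂ ⊗ₖ V₃)ᵀ) * (V₂ ⊗ₖ V₃)
        = V₁ᵀ * (U₁ * flat1 S * (U₂ ⊗ₖ U₃)ᵀ) * (V₂ ⊗ₖ V₃) := by rw [e1]
    calc flat1 T
        = (V₁ᵀ * V₁) * (flat1 T * ((V₂ ⊗ₖ V₃)ᵀ * (V₂ ⊗ₖ V₃))) := by
          rw [hV₁, kron_orth _ _ hV₂ hV₃, Matrix.one_mul, Matrix.mul_one]
    _ = V₁ᵀ * (V₁ * flat1 T * (V₂ ⊗ₖ V₃)ᵀ) * (V₂ ⊗ₖ V₃) := by simp only [Matrix.mul_assoc]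
    _ = V₁ᵀ * (U₁ * flat1 S * (U₂ ⊗ₖ U₃)ᵀ) * (V₂ ⊗ₖ V₃) := heq2
    _ = V₁ᵀ * U₁ * flat1 S * ((U₂ ⊗ₖ U₃)ᵀ * (V₂ ⊗ₖ V₃)) := by simp only [Matrix.mul_assoc]
  · intro Q₁ Q₂ Q₃ hQ₁ hQ₂ hQ₃
    apply flat1_inj
    rw [flat1_tact, flat1_tact, flat1_tact]
    have hW : ((U₂ * Q₂ᵀ) ⊗ₖ (U₃ * Q₃ᵀ))ᵀ = (Q₂ ⊗ₖ Q₃) * (U₂ ⊗ₖ U₃)ᵀ := by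
      rw [Matrix.mul_kronecker_mul, Matrix.transpose_mul, kroneckerMap_transpose,
        Matrix.transpose_transpose]
    rw [hW]
    have hK : (Q₂ ⊗ₖ Q₃)ᵀ * (Q₂ ⊗ₖ Q₃) = 1 := kron_orth _ _ hQ₂ hQ₃
    calc U₁ * Q₁ᵀ * (Q₁ * flat1 S * (Q₂ ⊗ₖ Q₃)ᵀ) * ((Q₂ ⊗ₖ Q₃) * (U₂ ⊗ₖ U₃)ᵀ)
        = U₁ * ((Q₁ᵀ * Q₁) * (flat1 S * (((Q₂ ⊗ₖ Q₃)ᵀ * (Q₂ ⊗ₖ Q₃)) * (U₂ ⊗ₖ U₃)ᵀ))) := by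
          simp only [Matrix.mul_assoc]
    _ = U₁ * flat1 S * (U₂ ⊗ₖ U₃)ᵀ := by
          rw [hQ₁, hK, Matrix.one_mul, Matrix.one_mul, Matrix.mul_assoc]
end
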